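/- arXiv:2501.15778 — 7 statements merged into one kernel-verified Lean document; each statement's English description precedes it below -/
import Mathlib

section
/- Let p be a prime and n an integer with 1 ≤ n ≤ p − 1. The map sending an admissible weight λ ∈ ℤ^n to the pair (A(λ), s(λ)), where A(λ) = { (λ_i + 1 − i) mod p : 1 ≤ i ≤ n } ⊆ ℤ/pℤ and s(λ) = Σ_{i=1}^n ⌊(λ_i + 1 − i)/p⌋ ∈ ℤ, is a bijection from the set of admissible weights in ℤ^n onto the set of pairs (A, s) with A an n-element subset of ℤ/pℤ and s ∈ ℤ. (This is the combinatorial content of the isomorphism between the Grothendieck group of Ver_p(GL_n) and the loop module (Λ^n ℂ^p)[t, t^{-1}].) -/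
/-- `l : Fin n → ℤ` is an admissible weight for `GL_n` in `Ver_p`:
`l` is weakly decreasing and the difference between its largest entry `l 0`
and its smallest entry `l (n-1)` is at most `p - n`
(stated equivalently as `l i - l j ≤ p - n` for all `i, j`). -/
def Admissible (p n : ℕ) (l : Fin n → ℤ) : Prop :=
  (∀ i j : Fin n, i ≤ j → l j ≤ l i) ∧ ∀ i j : Fin n, l i - l j ≤ (p : ℤ) - n

section Helpers

variable {n : ℕ}

/-- gap lemma: strictly increasing integer sequences grow at least by 1 per step -/
lemma strictMono_gap' {f : Fin n → ℤ} (hf : ∀ i j : Fin n, i < j → f i < f j) :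
    ∀ i j : Fin n, (i : ℕ) ≤ (j : ℕ) → f i + (((j : ℕ) : ℤ) - ((i : ℕ) : ℤ)) ≤ f j := by
  suffices H : ∀ t : ℕ, ∀ i j : Fin n, (j : ℕ) = (i : ℕ) + t → f i + (t : ℤ) ≤ f j by
    intro i j hij
    have h := H ((j : ℕ) - (i : ℕ)) i j (by omega)
    have : (((j : ℕ) - (i : ℕ) : ℕ) : ℤ) = ((j : ℕ) : ℤ) - ((i : ℕ) : ℤ) := by omega
    omega
  intro t
  induction t with
  | zero =>
      intro i j h
      have : i = j := Fin.ext (by omega)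
      simp [this]
  | succ t ih =>
      intro i j h
      have hj : (i : ℕ) + t < n := by omega
      have h1 := ih i ⟨(i : ℕ) + t, hj⟩ rfl
      have h2 : f ⟨(i : ℕ) + t, hj⟩ < f j := hf _ _ (by simp [Fin.lt_def]; omega)
      push_cast at h1 ⊢
      omega

lemma strictAnti_gap' {f : Fin n → ℤ} (hf : ∀ i j : Fin n, i < j → f j < f i) :
    ∀ i j : Fin n, (i : ℕ) ≤ (j : ℕ) → f j + (((j : ℕ) : ℤ) - ((i : ℕ) : ℤ)) ≤ f i := by
  intro i j hij
  have := strictMono_gap' (f := fun i => -f i) (fun i j h => by simpa using hf i j h) i j hij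
  simp at this
  omega

/-- two strictly decreasing integer sequences whose images agree coincide -/
lemma strictAnti_eq_of_images {f g : Fin n → ℤ}
    (hf : ∀ i j : Fin n, i < j → f j < f i) (hg : ∀ i j : Fin n, i < j → g j < g i)
    (h : ∀ i : Fin n, ∃ j : Fin n, g j = f i) : f = g := by
  classical
  have hginj : Function.Injective g := by
    intro a b hab
    by_contra hne
    rcases Ne.lt_or_gt hne with h' | h'
    · exact absurd hab (by have := hg a b h'; omega)
    · exact absurd hab (by have := hg b a h'; omega)
  set s : Finset ℤ := Finset.image g Finset.univ with hs
  have hcard : s.card = n := by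
    rw [hs, Finset.card_image_of_injective _ hginj, Finset.card_univ, Fintype.card_fin]
  have hF : StrictMono (fun i : Fin n => f i.rev) := fun a b hab =>
    hf b.rev a.rev (Fin.rev_lt_rev.mpr hab)
  have hG : StrictMono (fun i : Fin n => g i.rev) := fun a b hab =>
    hg b.rev a.rev (Fin.rev_lt_rev.mpr hab)
  have hFs : ∀ i : Fin n, f i.rev ∈ s := by
    intro i
    obtain ⟨j, hj⟩ := h i.rev
    exact hs ▸ Finset.mem_image.2 ⟨j, Finset.mem_univ _, hj⟩
  have hGs : ∀ i : Fin n, g i.rev ∈ s :=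
    fun i => hs ▸ Finset.mem_image_of_mem _ (Finset.mem_univ _)
  have e1 := Finset.orderEmbOfFin_unique hcard hFs hF
  have e2 := Finset.orderEmbOfFin_unique hcard hGs hG
  funext i
  have := congrFun (e1.trans e2.symm) i.rev
  simpa [Fin.rev_rev] using this

end Helpers

section Adm

variable {p n : ℕ} {l : Fin n → ℤ}

/-- basic gap/spread bounds for `d i = l i - i` of an admissible weight -/
lemma adm_gap (hn : 1 ≤ n) (hl : Admissible p n l) :
    ∀ i j : Fin n, i < j →
      1 ≤ (l i - ((i : ℕ) : ℤ)) - (l j - ((j : ℕ) : ℤ)) ∧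
      (l i - ((i : ℕ) : ℤ)) - (l j - ((j : ℕ) : ℤ)) ≤ (p : ℤ) - 1 := by
  intro i j hij
  have h1 : l j ≤ l i := hl.1 i j (le_of_lt hij)
  have h2 : l i - l j ≤ (p : ℤ) - n := hl.2 i j
  have h3 : (i : ℕ) < (j : ℕ) := hij
  have h4 : (j : ℕ) ≤ n - 1 := by omega
  constructor <;> omega

lemma adm_res_inj (hp : 0 < p) (hn : 1 ≤ n) (hl : Admissible p n l) :
    ∀ i j : Fin n,
      ((l i - ((i : ℕ) : ℤ) : ℤ) : ZMod p) = ((l j - ((j : ℕ) : ℤ) : ℤ) : ZMod p) → i = j := by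
  have key : ∀ i j : Fin n, i < j →
      ((l i - ((i : ℕ) : ℤ) : ℤ) : ZMod p) ≠ ((l j - ((j : ℕ) : ℤ) : ℤ) : ZMod p) := by
    intro i j hij heq
    have h := adm_gap hn hl i j hij
    have h0 : (((l i - ((i : ℕ) : ℤ)) - (l j - ((j : ℕ) : ℤ)) : ℤ) : ZMod p) = 0 := by
      push_cast
      rw [sub_eq_zero]
      exact_mod_cast heq
    have hdvd : (p : ℤ) ∣ (l i - ((i : ℕ) : ℤ)) - (l j - ((j : ℕ) : ℤ)) :=
      (ZMod.intCast_zmod_eq_zero_iff_dvd _ p).1 h0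
    have := Int.le_of_dvd (by omega) hdvd
    omega
  intro i j heq
  rcases lt_trichotomy i j with h | h | h
  · exact absurd heq (key i j h)
  · exact h
  · exact absurd heq.symm (key j i h)

/-- window bounds: all `d i` lie in `[m, m + (p-1)]` where `m = d (n-1)` -/
lemma adm_window (hn : 1 ≤ n) (hp : 0 < p) (hl : Admissible p n l) (hlast : n - 1 < n) :
    ∀ i : Fin n,
      (l ⟨n - 1, hlast⟩ - ((n : ℤ) - 1)) ≤ l i - ((i : ℕ) : ℤ) ∧
      l i - ((i : ℕ) : ℤ) ≤ (l ⟨n - 1, hlast⟩ - ((n : ℤ) - 1)) + ((p : ℤ) - 1) := by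
  intro i
  set last : Fin n := ⟨n - 1, hlast⟩ with hlastdef
  have h0v : ((⟨0, by omega⟩ : Fin n) : ℕ) = 0 := rfl
  have hlv : ((last : ℕ) : ℤ) = (n : ℤ) - 1 := by simp [hlastdef]; omega
  have h1 : l last - ((last : ℕ) : ℤ) ≤ l i - ((i : ℕ) : ℤ) := by
    rcases eq_or_lt_of_le (show i ≤ last from by simp [Fin.le_def, hlastdef]; omega) with h | h
    · rw [h]
    · have := adm_gap hn hl i last h
      omega
  have h2 : l i - ((i : ℕ) : ℤ) ≤ l ⟨0, by omega⟩ - ((0 : ℕ) : ℤ) := by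
    rcases eq_or_lt_of_le (show (⟨0, by omega⟩ : Fin n) ≤ i from by simp [Fin.le_def]) with h | h
    · rw [← h]
    · have := adm_gap hn hl ⟨0, by omega⟩ i h
      rw [h0v] at this
      push_cast at this ⊢
      omega
  have h3 : l ⟨0, by omega⟩ - ((0 : ℕ) : ℤ) ≤ (l last - ((last : ℕ) : ℤ)) + ((p : ℤ) - 1) := by
    rcases eq_or_lt_of_le (show (⟨0, by omega⟩ : Fin n) ≤ last from by simp [Fin.le_def]) with h | h
    · rw [h]; omega
    · have := adm_gap hn hl ⟨0, by omega⟩ last h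
      rw [h0v] at this
      push_cast at this ⊢
      omega
  rw [← hlv]
  omega

lemma adm_sum_eq [NeZero p] (d : Fin n → ℤ) :
    ∑ i : Fin n, d i =
      (p : ℤ) * (∑ i : Fin n, d i / p) + ∑ i : Fin n, (((d i : ℤ) : ZMod p).val : ℤ) := by
  rw [Finset.mul_sum, ← Finset.sum_add_distrib]
  apply Finset.sum_congr rfl
  intro i _
  have h1 := Int.mul_ediv_add_emod (d i) (p : ℤ)
  have h2 : (((d i : ℤ) : ZMod p).val : ℤ) = d i % p := ZMod.val_intCast (d i)
  omega

end Adm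

section Key

variable {p n : ℕ}

/-- if two integers in a window of width `p` are congruent mod `p`, they are equal -/
lemma eq_of_cong_window {p : ℕ} (hp : 0 < p) {m x y : ℤ}
    (hx : m ≤ x ∧ x ≤ m + ((p : ℤ) - 1)) (hy : m ≤ y ∧ y ≤ m + ((p : ℤ) - 1))
    (hcong : ((x : ZMod p)) = (y : ZMod p)) : x = y := by
  have h0 : (((x - y) : ℤ) : ZMod p) = 0 := by push_cast; rw [sub_eq_zero]; exact hcong
  have hdvd : (p : ℤ) ∣ x - y := (ZMod.intCast_zmod_eq_zero_iff_dvd _ p).1 h0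
  rcases hdvd with ⟨c, hc⟩
  have hc0 : c = 0 := by
    by_contra hne
    rcases Ne.lt_or_gt hne with h | h
    · have : (p : ℤ) * c ≤ (p : ℤ) * (-1) := by
        apply mul_le_mul_of_nonneg_left (by omega) (by positivity)
      omega
    · have : (p : ℤ) * 1 ≤ (p : ℤ) * c := by
        apply mul_le_mul_of_nonneg_left (by omega) (by positivity)
      omega
  rw [hc0, mul_zero] at hc
  omega

/-- The normalizing map into the window `[m', m' + p - 1]`. -/
lemma g_window (hp : 0 < p) (m' : ℤ) (x : ℤ) :
    m' ≤ x + (p : ℤ) * ((m' + ((p : ℤ) - 1) - x) / p) ∧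
    x + (p : ℤ) * ((m' + ((p : ℤ) - 1) - x) / p) ≤ m' + ((p : ℤ) - 1) := by
  set r : ℤ := m' + ((p : ℤ) - 1) - x with hr
  have h1 := Int.mul_ediv_add_emod r (p : ℤ)
  have h2 := Int.emod_nonneg r (by exact_mod_cast hp.ne' : (p : ℤ) ≠ 0)
  have h3 := Int.emod_lt_of_pos r (by exact_mod_cast hp : (0 : ℤ) < p)
  omega

lemma g_res (hp : 0 < p) (m' : ℤ) (x : ℤ) :
    (((x + (p : ℤ) * ((m' + ((p : ℤ) - 1) - x) / p)) : ℤ) : ZMod p) = (x : ZMod p) := by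
  push_cast
  simp

/-- Key comparison: same residues but `d` sits in a strictly lower window,
then the sum of `d` is strictly smaller. -/
lemma sum_lt_sum_of_window_lt (hp : 0 < p) (hn : 1 ≤ n) {d d' : Fin n → ℤ} {m m' : ℤ}
    (hm : ∀ i, m ≤ d i ∧ d i ≤ m + ((p : ℤ) - 1))
    (hm' : ∀ i, m' ≤ d' i ∧ d' i ≤ m' + ((p : ℤ) - 1))
    (hmmem : ∃ i, d i = m)
    (hres : ∀ i : Fin n, ∃ j : Fin n, ((d' j : ℤ) : ZMod p) = ((d i : ℤ) : ZMod p))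
    (hinj : ∀ i j : Fin n, ((d i : ℤ) : ZMod p) = ((d j : ℤ) : ZMod p) → i = j)
    (hlt : m < m') :
    ∑ i : Fin n, d i < ∑ i : Fin n, d' i := by
  classical
  set g : ℤ → ℤ := fun x => x + (p : ℤ) * ((m' + ((p : ℤ) - 1) - x) / p) with hg
  have key : ∀ i : Fin n, ∃ j : Fin n, d' j = g (d i) := by
    intro i
    obtain ⟨j, hj⟩ := hres i
    refine ⟨j, eq_of_cong_window hp (hm' j) (g_window hp m' (d i)) ?_⟩
    rw [hj, ← g_res hp m' (d i)]
  choose σ hσ using key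
  have hσinj : Function.Injective σ := by
    intro a b hab
    apply hinj
    have : g (d a) = g (d b) := by rw [← hσ a, ← hσ b, hab]
    have h2 : ((g (d a) : ℤ) : ZMod p) = ((g (d b) : ℤ) : ZMod p) := by rw [this]
    rwa [g_res hp, g_res hp] at h2
  have hbij : Function.Bijective σ := Finite.injective_iff_bijective.1 hσinj
  have hsum : ∑ i : Fin n, d' (σ i) = ∑ j : Fin n, d' j := hbij.sum_comp d'
  have hge : ∀ i : Fin n, d i ≤ d' (σ i) := by
    intro i
    rw [hσ i]
    have hdiv : 0 ≤ (m' + ((p : ℤ) - 1) - d i) / p :=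
      Int.ediv_nonneg (by have := (hm i).2; omega) (by positivity)
    have : 0 ≤ (p : ℤ) * ((m' + ((p : ℤ) - 1) - d i) / p) := by positivity
    simp only [hg]
    omega
  obtain ⟨i0, hi0⟩ := hmmem
  have hstrict : d i0 < d' (σ i0) := by
    have h1 := (hm' (σ i0)).1
    have h2 := hge i0
    have h3 := hσ i0
    omega
  have := Finset.sum_lt_sum (fun i (_ : i ∈ Finset.univ) => hge i)
    ⟨i0, Finset.mem_univ _, hstrict⟩
  omega

end Key

/-- The map `λ ↦ (A(λ), s(λ))` with `A(λ) = {(λ_i + 1 - i) mod p}`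
(in 0-based indexing `(l i - i) mod p`) and `s(λ) = Σ ⌊(λ_i + 1 - i)/p⌋`
is a bijection from admissible weights onto pairs `(A, s)` with
`A` an `n`-element subset of `ℤ/pℤ` and `s ∈ ℤ`.
(Note: for a positive divisor, integer division `/` on `ℤ` in Mathlib is
floor division.) -/
theorem admissible_weights_biject_with_subset_and_twist
    (p n : ℕ) (hp : p.Prime) (hn : 1 ≤ n) (hnp : n ≤ p - 1) :
    Set.BijOn
      (fun l : Fin n → ℤ =>
        ((Finset.univ.image fun i : Fin n => ((l i - ((i : ℕ) : ℤ) : ℤ) : ZMod p),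
          ∑ i : Fin n, (l i - ((i : ℕ) : ℤ)) / (p : ℤ)) : Finset (ZMod p) × ℤ))
      {l : Fin n → ℤ | Admissible p n l}
      {As : Finset (ZMod p) × ℤ | As.1.card = n} := by
  classical
  have hp2 := hp.two_le
  have ppos : 0 < p := hp.pos
  haveI : NeZero p := ⟨hp.ne_zero⟩
  have npos : 0 < n := hn
  have hlastlt : n - 1 < n := by omega
  have pne : (p : ℤ) ≠ 0 := by exact_mod_cast ppos.ne'
  -- MapsTo
  have hmaps : ∀ l : Fin n → ℤ, Admissible p n l →
      (Finset.univ.image fun i : Fin n => ((l i - ((i : ℕ) : ℤ) : ℤ) : ZMod p)).card = n := by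
    intro l hl
    have hinj := adm_res_inj ppos hn hl
    rw [Finset.card_image_of_injOn (fun i _ j _ h => hinj i j h), Finset.card_univ,
      Fintype.card_fin]
  refine ⟨fun l hl => hmaps l hl, ?_, ?_⟩
  · -- InjOn
    intro l hl l' hl' heq
    simp only [Set.mem_setOf_eq] at hl hl'
    rw [Prod.mk.injEq] at heq
    obtain ⟨heqA, heqS⟩ := heq
    set d : Fin n → ℤ := fun i => l i - ((i : ℕ) : ℤ) with hd
    set d' : Fin n → ℤ := fun i => l' i - ((i : ℕ) : ℤ) with hd'
    have hinjd := adm_res_inj ppos hn hl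
    have hinjd' := adm_res_inj ppos hn hl'
    -- sums of residues agree
    have hressum : ∑ i : Fin n, (((d i : ℤ) : ZMod p).val : ℤ)
        = ∑ i : Fin n, (((d' i : ℤ) : ZMod p).val : ℤ) := by
      rw [← Finset.sum_image (f := fun a : ZMod p => (a.val : ℤ))
          (g := fun i : Fin n => ((d i : ℤ) : ZMod p)) (fun x _ y _ h => hinjd x y h),
        ← Finset.sum_image (f := fun a : ZMod p => (a.val : ℤ))
          (g := fun i : Fin n => ((d' i : ℤ) : ZMod p)) (fun x _ y _ h => hinjd' x y h)]
      rw [heqA]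
    have hsums : ∑ i : Fin n, d i = ∑ i : Fin n, d' i := by
      rw [adm_sum_eq (p := p) d, adm_sum_eq (p := p) d', hressum, heqS]
    -- windows
    have hw := adm_window hn ppos hl hlastlt
    have hw' := adm_window hn ppos hl' hlastlt
    set m : ℤ := l ⟨n - 1, hlastlt⟩ - ((n : ℤ) - 1) with hm
    set m' : ℤ := l' ⟨n - 1, hlastlt⟩ - ((n : ℤ) - 1) with hm'
    have hmm : ∃ i, d i = m := ⟨⟨n - 1, hlastlt⟩, by
      simp only [hd, hm]
      have : ((((⟨n - 1, hlastlt⟩ : Fin n) : ℕ)) : ℤ) = (n : ℤ) - 1 := by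
        simp; omega
      rw [this]⟩
    have hmm' : ∃ i, d' i = m' := ⟨⟨n - 1, hlastlt⟩, by
      simp only [hd', hm']
      have : ((((⟨n - 1, hlastlt⟩ : Fin n) : ℕ)) : ℤ) = (n : ℤ) - 1 := by
        simp; omega
      rw [this]⟩
    have hres1 : ∀ i : Fin n, ∃ j : Fin n, ((d' j : ℤ) : ZMod p) = ((d i : ℤ) : ZMod p) := by
      intro i
      have : ((d i : ℤ) : ZMod p) ∈
          Finset.univ.image fun i : Fin n => ((d' i : ℤ) : ZMod p) := by
        rw [← heqA]
        exact Finset.mem_image_of_mem _ (Finset.mem_univ i)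
      obtain ⟨j, _, hj⟩ := Finset.mem_image.1 this
      exact ⟨j, hj⟩
    have hres2 : ∀ i : Fin n, ∃ j : Fin n, ((d j : ℤ) : ZMod p) = ((d' i : ℤ) : ZMod p) := by
      intro i
      have : ((d' i : ℤ) : ZMod p) ∈
          Finset.univ.image fun i : Fin n => ((d i : ℤ) : ZMod p) := by
        rw [heqA]
        exact Finset.mem_image_of_mem _ (Finset.mem_univ i)
      obtain ⟨j, _, hj⟩ := Finset.mem_image.1 this
      exact ⟨j, hj⟩
    have hmeq : m = m' := by
      rcases lt_trichotomy m m' with h | h | h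
      · exact absurd hsums
          (ne_of_lt (sum_lt_sum_of_window_lt ppos hn hw hw' hmm hres1 hinjd h))
      · exact h
      · exact absurd hsums
          (ne_of_gt (sum_lt_sum_of_window_lt ppos hn hw' hw hmm' hres2 hinjd' h))
    -- now the two sequences agree
    have hkey : ∀ i : Fin n, ∃ j : Fin n, d' j = d i := by
      intro i
      obtain ⟨j, hj⟩ := hres1 i
      exact ⟨j, eq_of_cong_window ppos (hmeq ▸ hw' j) (hw i) hj⟩
    have hanti : ∀ i j : Fin n, i < j → d j < d i := by
      intro i j hij
      have := adm_gap hn hl i j hij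
      simp only [hd]
      omega
    have hanti' : ∀ i j : Fin n, i < j → d' j < d' i := by
      intro i j hij
      have := adm_gap hn hl' i j hij
      simp only [hd']
      omega
    have hdeq : d = d' := strictAnti_eq_of_images hanti hanti' hkey
    funext i
    have := congrFun hdeq i
    simp only [hd, hd'] at this
    omega
  · -- SurjOn
    rintro ⟨A, s⟩ hAs
    simp only [Set.mem_setOf_eq] at hAs
    -- the sorted lifts of A
    set T : Finset ℕ := A.image ZMod.val with hTdef
    have hT : T.card = n := by
      rw [hTdef, Finset.card_image_of_injective _ (ZMod.val_injective p), hAs]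
    have hTlt : ∀ x ∈ T, x < p := by
      intro x hx
      obtain ⟨a, _, ha⟩ := Finset.mem_image.1 hx
      rw [← ha]
      exact ZMod.val_lt a
    set e : Fin n ↪o ℕ := T.orderEmbOfFin hT with hedef
    set b : Fin n → ℤ := fun j => ((e j.rev : ℕ) : ℤ) with hbdef
    have hb_anti : ∀ i j : Fin n, i < j → b j < b i := by
      intro i j hij
      have : e j.rev < e i.rev := e.strictMono (Fin.rev_lt_rev.mpr hij)
      simp only [hbdef]
      exact_mod_cast this
    have hb_mem : ∀ j : Fin n, (e j.rev : ℕ) ∈ T := fun j => Finset.orderEmbOfFin_mem T hT j.rev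
    have hb_rng : ∀ j : Fin n, 0 ≤ b j ∧ b j ≤ (p : ℤ) - 1 := by
      intro j
      have h1 := hTlt _ (hb_mem j)
      simp only [hbdef]
      omega
    have hb_gap := strictAnti_gap' hb_anti
    have hb_spread : ∀ i j : Fin n, (i : ℕ) ≤ (j : ℕ) →
        b i - b j ≤ (p : ℤ) - n + (((j : ℕ) : ℤ) - ((i : ℕ) : ℤ)) := by
      intro i j hij
      have h0v : ((⟨0, npos⟩ : Fin n) : ℕ) = 0 := rfl
      have hlv : ((⟨n - 1, hlastlt⟩ : Fin n) : ℕ) = n - 1 := rfl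
      have h1 := hb_gap ⟨0, npos⟩ i (by omega)
      have h2 := hb_gap j ⟨n - 1, hlastlt⟩ (by rw [hlv]; omega)
      have h3 := (hb_rng ⟨0, npos⟩).2
      have h4 := (hb_rng ⟨n - 1, hlastlt⟩).1
      rw [h0v] at h1
      rw [hlv] at h2
      have h5 : (j : ℕ) ≤ n - 1 := by omega
      omega
    -- the twist decomposition s = n*q + k'
    set q : ℤ := s / (n : ℤ) with hqdef
    set k' : ℕ := (s % (n : ℤ)).toNat with hkdef
    have nzpos : (0 : ℤ) < n := by exact_mod_cast npos
    have hk1 : (k' : ℤ) = s % (n : ℤ) := Int.toNat_of_nonneg (Int.emod_nonneg s nzpos.ne')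
    have hk2 : k' < n := by
      have := Int.emod_lt_of_pos s nzpos
      omega
    -- the rotation
    set rot : Fin n → Fin n := fun i => ⟨((i : ℕ) + (n - k')) % n, Nat.mod_lt _ npos⟩
      with hrotdef
    have hrot_lt : ∀ i : Fin n, (i : ℕ) < k' → ((rot i : ℕ) = (i : ℕ) + (n - k')) := by
      intro i hi
      simp only [hrotdef]
      exact Nat.mod_eq_of_lt (by omega)
    have hrot_ge : ∀ i : Fin n, k' ≤ (i : ℕ) → ((rot i : ℕ) = (i : ℕ) - k') := by
      intro i hi
      simp only [hrotdef]
      have h : (i : ℕ) + (n - k') = ((i : ℕ) - k') + n := by omega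
      rw [h, Nat.add_mod_right]
      exact Nat.mod_eq_of_lt (by omega)
    -- the constructed weight
    set L : Fin n → ℤ := fun i =>
      b (rot i) + (p : ℤ) * q + (if (i : ℕ) < k' then (p : ℤ) else 0) + ((i : ℕ) : ℤ)
      with hLdef
    have hdL : ∀ i : Fin n, L i - ((i : ℕ) : ℤ)
        = b (rot i) + (p : ℤ) * q + (if (i : ℕ) < k' then (p : ℤ) else 0) := by
      intro i
      simp only [hLdef]
      ring
    -- gap property for d
    have Hgap : ∀ i j : Fin n, (i : ℕ) ≤ (j : ℕ) →
        (L j - ((j : ℕ) : ℤ)) + (((j : ℕ) : ℤ) - ((i : ℕ) : ℤ)) ≤ L i - ((i : ℕ) : ℤ) := by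
      intro i j hij
      rw [hdL i, hdL j]
      have hilt := i.isLt
      have hjlt := j.isLt
      by_cases hjk : (j : ℕ) < k'
      · have hik : (i : ℕ) < k' := by omega
        rw [if_pos hik, if_pos hjk]
        have r1 := hrot_lt i hik
        have r2 := hrot_lt j hjk
        have := hb_gap (rot i) (rot j) (by omega)
        omega
      · by_cases hik : (i : ℕ) < k'
        · rw [if_pos hik, if_neg hjk]
          have r1 := hrot_lt i hik
          have r2 := hrot_ge j (by omega)
          have hsp := hb_spread (rot j) (rot i) (by omega)
          omega
        · rw [if_neg hik, if_neg hjk]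
          have r1 := hrot_ge i (by omega)
          have r2 := hrot_ge j (by omega)
          have := hb_gap (rot i) (rot j) (by omega)
          omega
    have Hspread : ∀ i j : Fin n, (i : ℕ) ≤ (j : ℕ) →
        (L i - ((i : ℕ) : ℤ)) - (L j - ((j : ℕ) : ℤ))
          ≤ (p : ℤ) - n + (((j : ℕ) : ℤ) - ((i : ℕ) : ℤ)) := by
      intro i j hij
      rw [hdL i, hdL j]
      have hilt := i.isLt
      have hjlt := j.isLt
      by_cases hjk : (j : ℕ) < k'
      · have hik : (i : ℕ) < k' := by omega
        rw [if_pos hik, if_pos hjk]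
        have r1 := hrot_lt i hik
        have r2 := hrot_lt j hjk
        have := hb_spread (rot i) (rot j) (by omega)
        omega
      · by_cases hik : (i : ℕ) < k'
        · rw [if_pos hik, if_neg hjk]
          have r1 := hrot_lt i hik
          have r2 := hrot_ge j (by omega)
          have := hb_gap (rot j) (rot i) (by omega)
          omega
        · rw [if_neg hik, if_neg hjk]
          have r1 := hrot_ge i (by omega)
          have r2 := hrot_ge j (by omega)
          have := hb_spread (rot i) (rot j) (by omega)
          omega
    -- admissibility
    have hadm : Admissible p n L := by
      constructor
      · intro i j hij
        have := Hgap i j hij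
        omega
      · intro i j
        rcases le_or_gt (i : ℕ) (j : ℕ) with h | h
        · have := Hspread i j h
          omega
        · have := Hgap j i (le_of_lt h)
          have hnp' : (n : ℤ) ≤ (p : ℤ) - 1 := by omega
          omega
    -- residues
    have hres_sub : (Finset.univ.image fun i : Fin n => ((L i - ((i : ℕ) : ℤ) : ℤ) : ZMod p))
        ⊆ A := by
      intro x hx
      obtain ⟨i, _, hi⟩ := Finset.mem_image.1 hx
      have h1 : ((L i - ((i : ℕ) : ℤ) : ℤ) : ZMod p) = ((e (rot i).rev : ℕ) : ZMod p) := by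
        rw [hdL i]
        have hb1 : b (rot i) = ((e (rot i).rev : ℕ) : ℤ) := rfl
        rw [hb1]
        split_ifs <;> push_cast <;> simp
      obtain ⟨a, haA, hav⟩ := Finset.mem_image.1 (hb_mem (rot i))
      have h2 : ((e (rot i).rev : ℕ) : ZMod p) = a := by
        rw [show (e (rot i).rev : ℕ) = a.val from hav.symm ▸ rfl]
        exact ZMod.natCast_rightInverse a
      rw [← hi, h1, h2]
      exact haA
    have himg : (Finset.univ.image fun i : Fin n => ((L i - ((i : ℕ) : ℤ) : ℤ) : ZMod p))
        = A := by
      apply Finset.eq_of_subset_of_card_le hres_sub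
      rw [hmaps L hadm, hAs]
    -- sum
    have hdiv : ∀ i : Fin n, (L i - ((i : ℕ) : ℤ)) / (p : ℤ)
        = q + (if (i : ℕ) < k' then 1 else 0) := by
      intro i
      rw [hdL i]
      have hr1 := (hb_rng (rot i)).1
      have hr2 := (hb_rng (rot i)).2
      have hz : b (rot i) / (p : ℤ) = 0 := Int.ediv_eq_zero_of_lt hr1 (by omega)
      split_ifs with h
      · have : b (rot i) + (p : ℤ) * q + (p : ℤ) = b (rot i) + (p : ℤ) * (q + 1) := by ring
        rw [this, Int.add_mul_ediv_left _ _ pne, hz, zero_add]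
      · rw [add_zero, Int.add_mul_ediv_left _ _ pne, hz, zero_add, add_zero]
    have hcount : ∑ i : Fin n, (if (i : ℕ) < k' then (1 : ℤ) else 0) = (k' : ℤ) := by
      rw [Fin.sum_univ_eq_sum_range (fun x => if x < k' then (1 : ℤ) else 0) n]
      rw [← Finset.sum_filter]
      have hfil : (Finset.range n).filter (fun x => x < k') = Finset.range k' := by
        ext x
        simp only [Finset.mem_filter, Finset.mem_range]
        omega
      rw [hfil, Finset.sum_const, Finset.card_range]
      simp
    have hsum : ∑ i : Fin n, (L i - ((i : ℕ) : ℤ)) / (p : ℤ) = s := by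
      rw [Finset.sum_congr rfl (fun i _ => hdiv i), Finset.sum_add_distrib, hcount,
        Finset.sum_const, Finset.card_univ, Fintype.card_fin]
      have := Int.mul_ediv_add_emod s (n : ℤ)
      rw [nsmul_eq_mul]
      rw [← hqdef, ← hk1] at this
      omega
    exact ⟨L, hadm, by rw [Prod.mk.injEq]; exact ⟨himg, hsum⟩⟩
end

section
/- Let p be a prime, n an integer with 1 ≤ n ≤ p − 1, λ ∈ ℤ^n an admissible weight, and 1 ≤ i ≤ n. Then λ + e_i is an admissible weight if and only if λ_i + 2 − i ≢ λ_j + 1 − j (mod p) for every j = 1, …, n. (This characterizes when the translation functor F_c with c ≡ λ_i + 1 − i sends V_λ to a nonzero simple object.) -/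
/-- `λ + e_i` is admissible iff `λ_i + 2 - i ≢ λ_j + 1 - j (mod p)` for all `j`
(in 0-based indexing: `l i + 1 - i ≢ l j - j (mod p)` for all `j`). -/
theorem add_box_admissible_iff
    (p n : ℕ) (hp : p.Prime) (hn : 1 ≤ n) (hnp : n ≤ p - 1)
    (l : Fin n → ℤ) (hl : Admissible p n l) (i : Fin n) :
    Admissible p n (fun k => l k + if k = i then 1 else 0) ↔
      ∀ j : Fin n,
        ¬ (l i + 1 - ((i : ℕ) : ℤ) ≡ l j - ((j : ℕ) : ℤ) [ZMOD (p : ℤ)]) := by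
  obtain ⟨hmono, hbd⟩ := hl
  have hp2 : 2 ≤ p := hp.two_le
  have hnpZ : (n : ℤ) ≤ (p : ℤ) - 1 := by
    have : (n : ℤ) ≤ ((p - 1 : ℕ) : ℤ) := by exact_mod_cast hnp
    omega
  have hiZ : ((i : ℕ) : ℤ) < n := by exact_mod_cast i.isLt
  constructor
  · rintro ⟨hmono', hbd'⟩ j hcong
    have hd : (p : ℤ) ∣ (l j - ((j : ℕ) : ℤ)) - (l i + 1 - ((i : ℕ) : ℤ)) :=
      Int.modEq_iff_dvd.mp hcong
    have hjZ : ((j : ℕ) : ℤ) < n := by exact_mod_cast j.isLt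
    set D : ℤ := (l j - ((j : ℕ) : ℤ)) - (l i + 1 - ((i : ℕ) : ℤ)) with hD
    rcases lt_trichotomy (j : ℕ) (i : ℕ) with hji | hji | hji
    · -- j < i : then l i + 1 ≤ l j by monotonicity of μ, so 0 < D ≤ p - 2
      have hne : ¬ (j = i) := fun h => by rw [h] at hji; exact lt_irrefl _ hji
      have h1 := hmono' j i (Fin.le_def.mpr (le_of_lt hji))
      simp [hne] at h1
      have h2 : l j - l i ≤ (p : ℤ) - n := hbd j i
      have hjiZ : ((j : ℕ) : ℤ) < ((i : ℕ) : ℤ) := by exact_mod_cast hji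
      have hDpos : 0 < D := by omega
      have := Int.le_of_dvd hDpos hd
      omega
    · -- j = i : D = -1
      have hji' : j = i := Fin.ext hji
      have hD1 : D = -1 := by rw [hD, hji']; ring
      rw [hD1] at hd
      have : (p : ℤ) ∣ 1 := dvd_neg.mp hd
      have := Int.le_of_dvd one_pos this
      omega
    · -- j > i : then l i + 1 - l j ≤ p - n from hbd', so -p < D < 0
      have hne : ¬ (j = i) := fun h => by rw [h] at hji; exact lt_irrefl _ hji
      have h1 := hbd' i j
      simp [hne] at h1
      have h2 : l j ≤ l i := hmono i j (Fin.le_def.mpr (le_of_lt hji))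
      have hjiZ : ((i : ℕ) : ℤ) < ((j : ℕ) : ℤ) := by exact_mod_cast hji
      have hDneg : 0 < -D := by omega
      have := Int.le_of_dvd hDneg (dvd_neg.mpr hd)
      omega
  · intro h
    have key : ∀ j : Fin n, ¬ ((p : ℤ) ∣ (l j - ((j : ℕ) : ℤ)) - (l i + 1 - ((i : ℕ) : ℤ))) := by
      intro j hdvd
      exact h j (Int.modEq_iff_dvd.mpr hdvd)
    -- key step: l a = l i for some a with a < i is impossible
    have step1 : ∀ a : Fin n, (a : ℕ) < (i : ℕ) → l i + 1 ≤ l a := by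
      intro a ha
      by_contra hcon
      push_neg at hcon
      have hai : l a ≤ l i := by omega
      have h1 : 1 ≤ (i : ℕ) := by omega
      set j' : Fin n := ⟨(i : ℕ) - 1, by omega⟩ with hj'
      have haj' : a ≤ j' := Fin.le_def.mpr (show (a : ℕ) ≤ (i : ℕ) - 1 by omega)
      have hj'i : j' ≤ i := Fin.le_def.mpr (show (i : ℕ) - 1 ≤ (i : ℕ) by omega)
      have e1 : l j' ≤ l a := hmono a j' haj'
      have e2 : l i ≤ l j' := hmono j' i hj'i
      have hlj' : l j' = l i := by omega
      have hcast : ((j' : ℕ) : ℤ) = ((i : ℕ) : ℤ) - 1 := by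
        show (((i : ℕ) - 1 : ℕ) : ℤ) = ((i : ℕ) : ℤ) - 1
        omega
      refine key j' ?_
      have he : (l j' - ((j' : ℕ) : ℤ)) - (l i + 1 - ((i : ℕ) : ℤ)) = 0 := by
        rw [hlj', hcast]; ring
      rw [he]
      exact dvd_zero _
    constructor
    · -- monotone
      intro a b hab
      by_cases hb : b = i
      · by_cases ha : a = i
        · rw [ha, hb]
        · have hai : (a : ℕ) < (i : ℕ) := by
            have h1 := Fin.le_def.mp hab
            have h2 : (b : ℕ) = (i : ℕ) := by rw [hb]
            have h3 : (a : ℕ) ≠ (i : ℕ) := fun hh => ha (Fin.ext hh)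
            omega
          have hs := step1 a hai
          simp only [if_pos hb, if_neg ha]
          rw [hb]
          omega
      · have h1 : l b ≤ l a := hmono a b hab
        simp only [if_neg hb]
        split <;> omega
    · -- bounded
      intro a b
      by_cases ha : a = i
      · by_cases hb : b = i
        · rw [ha, hb]; omega
        · simp only [if_pos ha, if_neg hb]
          rw [ha]
          by_contra hcon
          push_neg at hcon
          have hle : l i - l b ≤ (p : ℤ) - n := hbd i b
          have heq : l i - l b = (p : ℤ) - n := by omega
          by_cases hi0 : (i : ℕ) = 0
          · -- take j = last index
            set j' : Fin n := ⟨n - 1, by omega⟩ with hj'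
            have hbj' : b ≤ j' := Fin.le_def.mpr (show (b : ℕ) ≤ n - 1 by
              have := b.isLt; omega)
            have e1 : l j' ≤ l b := hmono b j' hbj'
            have hle2 : l i - l j' ≤ (p : ℤ) - n := hbd i j'
            have heq2 : l i - l j' = (p : ℤ) - n := by omega
            have hcast : ((j' : ℕ) : ℤ) = (n : ℤ) - 1 := by
              show ((n - 1 : ℕ) : ℤ) = (n : ℤ) - 1
              omega
            have hicast : ((i : ℕ) : ℤ) = 0 := by exact_mod_cast hi0
            refine key j' ?_
            rw [hcast, hicast]
            have he : (l j' - ((n : ℤ) - 1)) - (l i + 1 - 0) = -(p : ℤ) := by omega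
            rw [he]
            exact dvd_neg.mpr dvd_rfl
          · -- i > 0 : then l 0 = l i, contradiction with step1
            set z : Fin n := ⟨0, by omega⟩ with hz
            have hzi : z ≤ i := Fin.le_def.mpr (show 0 ≤ (i : ℕ) by omega)
            have e1 : l i ≤ l z := hmono z i hzi
            have hle2 : l z - l b ≤ (p : ℤ) - n := hbd z b
            have hzi' : (z : ℕ) < (i : ℕ) := show 0 < (i : ℕ) by omega
            have := step1 z hzi'
            omega
      · simp only [if_neg ha]
        have h1 : l a - l b ≤ (p : ℤ) - n := hbd a b
        split <;> omega
end

section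
/- Let p be a prime, n an integer with 1 ≤ n ≤ p − 1, λ ∈ ℤ^n an admissible weight, and 1 ≤ i ≤ n. Then λ − e_i is an admissible weight if and only if λ_i − i ≢ λ_j + 1 − j (mod p) for every j = 1, …, n. (This characterizes when the translation functor E_c with c ≡ λ_i − i sends V_λ to a nonzero simple object.) -/
/-- `λ - e_i` is admissible iff `λ_i - i ≢ λ_j + 1 - j (mod p)` for all `j`
(in 0-based indexing: `l i - 1 - i ≢ l j - j (mod p)` for all `j`). -/
theorem remove_box_admissible_iff
    (p n : ℕ) (hp : p.Prime) (hn : 1 ≤ n) (hnp : n ≤ p - 1)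
    (l : Fin n → ℤ) (hl : Admissible p n l) (i : Fin n) :
    Admissible p n (fun k => l k - if k = i then 1 else 0) ↔
      ∀ j : Fin n,
        ¬ (l i - 1 - ((i : ℕ) : ℤ) ≡ l j - ((j : ℕ) : ℤ) [ZMOD (p : ℤ)]) := by
  obtain ⟨hmono, hd⟩ := hl
  have hp2 : 2 ≤ p := hp.two_le
  have hpn : (n : ℤ) + 1 ≤ (p : ℤ) := by exact_mod_cast (by omega : n + 1 ≤ p)
  have hin : (i : ℕ) < n := i.isLt
  constructor
  · rintro ⟨hm', hd'⟩ j hcon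
    rw [Int.modEq_iff_dvd] at hcon
    have hjn : ((j : ℕ) : ℤ) < n := by exact_mod_cast j.isLt
    have hiZ : ((i : ℕ) : ℤ) < n := by exact_mod_cast hin
    rcases lt_trichotomy (i : ℕ) (j : ℕ) with h | h | h
    · -- i < j : strict decrease at i forbids the congruence
      have hij : i ≤ j := Fin.le_def.mpr h.le
      have hne : j ≠ i := by
        intro hji; rw [hji] at h; exact lt_irrefl _ h
      have h1 : l j ≤ l i - 1 := by simpa [hne] using hm' i j hij
      have h2 := hd i j
      have hh : ((i : ℕ) : ℤ) < ((j : ℕ) : ℤ) := by exact_mod_cast h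
      have hz := Int.eq_zero_of_abs_lt_dvd hcon (by
        rw [abs_lt]; constructor <;> omega)
      omega
    · -- j = i : would give p ∣ 1
      have hji : j = i := Fin.ext h.symm
      subst hji
      have hz := Int.eq_zero_of_abs_lt_dvd hcon (by
        rw [abs_lt]; constructor <;> omega)
      omega
    · -- j < i : gap condition forbids the congruence
      have hji : j ≤ i := Fin.le_def.mpr h.le
      have hne : j ≠ i := by
        intro hji'; rw [hji'] at h; exact lt_irrefl _ h
      have h1 : l j - (l i - 1) ≤ (p : ℤ) - n := by simpa [hne] using hd' j i
      have h2 := hmono j i hji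
      have hh : ((j : ℕ) : ℤ) < ((i : ℕ) : ℤ) := by exact_mod_cast h
      have hz := Int.eq_zero_of_abs_lt_dvd hcon (by
        rw [abs_lt]; constructor <;> omega)
      omega
  · intro hR
    -- auxiliary: if `l (i+1) = l i` then the congruence holds at `j = i+1`
    have key : ∀ hi1 : (i : ℕ) + 1 < n, l ⟨(i : ℕ) + 1, hi1⟩ ≠ l i := by
      intro hi1 heq
      apply hR ⟨(i : ℕ) + 1, hi1⟩
      rw [Int.modEq_iff_dvd]
      have hz : l ⟨(i : ℕ) + 1, hi1⟩ - (((i : ℕ) + 1 : ℕ) : ℤ) -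
          (l i - 1 - ((i : ℕ) : ℤ)) = 0 := by push_cast; omega
      rw [hz]
      exact dvd_zero _
    constructor
    · intro a b hab
      simp only
      by_cases hb : b = i
      · by_cases ha : a = i
        · rw [if_pos ha, if_pos hb]
          have := hmono a b hab; omega
        · rw [if_pos hb, if_neg ha]
          have := hmono a b hab; omega
      · rw [if_neg hb]
        by_cases ha : a = i
        · rw [if_pos ha]
          have h1 := hmono a b hab
          by_contra hcon
          have heq : l b = l a := by omega
          have hib : (a : ℕ) < (b : ℕ) := by
            rcases lt_or_eq_of_le (Fin.le_def.mp hab) with h | h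
            · exact h
            · exact absurd ((Fin.ext h).symm.trans ha) hb
          rw [ha] at h1 heq hib
          have hi1 : (i : ℕ) + 1 < n := by have := b.isLt; omega
          refine key hi1 ?_
          have hu := hmono i ⟨(i : ℕ) + 1, hi1⟩
            (by simp only [Fin.le_def, Fin.val_mk]; omega)
          have hlo := hmono ⟨(i : ℕ) + 1, hi1⟩ b
            (by simp only [Fin.le_def, Fin.val_mk]; omega)
          omega
        · rw [if_neg ha]
          have := hmono a b hab; omega
    · intro a b
      simp only
      by_cases hb : b = i
      · by_cases ha : a = i
        · rw [if_pos ha, if_pos hb, ha, hb]; omega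
        · rw [if_neg ha, if_pos hb]
          have h1 := hd a b
          by_contra hcon
          have heq : l a - l i = (p : ℤ) - n := by rw [← hb]; omega
          by_cases hi1 : (i : ℕ) + 1 < n
          · -- then `l (i+1) = l i`, contradicting `key`
            refine key hi1 ?_
            have hu := hmono i ⟨(i : ℕ) + 1, hi1⟩
              (by simp only [Fin.le_def, Fin.val_mk]; omega)
            have hlo := hd a ⟨(i : ℕ) + 1, hi1⟩
            omega
          · -- `i = n - 1` : use `j = 0`
            have hbv : (i : ℕ) = n - 1 := by omega
            apply hR ⟨0, by omega⟩
            rw [Int.modEq_iff_dvd]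
            have h0a := hmono (⟨0, by omega⟩ : Fin n) a
              (by simp only [Fin.le_def, Fin.val_mk]; omega)
            have h0b := hd (⟨0, by omega⟩ : Fin n) i
            refine ⟨1, ?_⟩
            simp only [Fin.val_mk]
            push_cast
            omega
      · have h1 := hd a b
        rw [if_neg hb]
        split_ifs <;> omega
end

section
/- Let m, n ≥ 1 and let β_1, …, β_{mn} be an enumeration of the positive odd roots {ε_a − δ_b : 1 ≤ a ≤ m, 1 ≤ b ≤ n} such that β_i ⪯ β_j implies i ≤ j. Then for every k = 1, …, mn, writing β_k = ε_a − δ_b, one has ⟨ Σ_{i=1}^{k−1} β_i , β_k ⟩ = a + b − m − 1; equivalently, ⟨ Σ_{i=1}^{k−1} β_i , β_k ⟩ = −⟨ρ, β_k⟩, since ⟨2ρ, ε_a − δ_b⟩ = 2(m + 1 − a − b). -/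
/-- Elements of `ℤ^{m+n}` written in the coordinates
`ε_1, …, ε_m, δ_1, …, δ_n`. -/
abbrev SuperWeight (m n : ℕ) := (Fin m → ℤ) × (Fin n → ℤ)

/-- The symmetric bilinear form with `⟨ε_i, ε_j⟩ = δ_{ij}`, `⟨ε_i, δ_j⟩ = 0`,
`⟨δ_i, δ_j⟩ = -δ_{ij}`. -/
def form (m n : ℕ) (v w : SuperWeight m n) : ℤ :=
  (∑ i : Fin m, v.1 i * w.1 i) - (∑ j : Fin n, v.2 j * w.2 j)

/-- The positive odd root `ε_a - δ_b`. -/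
def oddRoot (m n : ℕ) (a : Fin m) (b : Fin n) : SuperWeight m n :=
  (fun i => if i = a then 1 else 0, fun j => if j = b then -1 else 0)

/-- The weight `2ρ^{(m|n)}`: in 1-based coordinates
`2ρ = Σ_i (m - n + 1 - 2i) ε_i + Σ_j (m + n + 1 - 2j) δ_j`. -/
def twoRho (m n : ℕ) : SuperWeight m n :=
  (fun i => (m : ℤ) - n - 1 - 2 * ((i : ℕ) : ℤ),
   fun j => (m : ℤ) + n - 1 - 2 * ((j : ℕ) : ℤ))
lemma form_sum (m n : ℕ) (s : Finset (Fin (m*n))) (f : Fin (m*n) → SuperWeight m n)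
    (w : SuperWeight m n) :
    form m n (∑ i ∈ s, f i) w = ∑ i ∈ s, form m n (f i) w := by
  simp only [form, Prod.fst_sum, Prod.snd_sum, Finset.sum_apply, Finset.sum_mul,
    Finset.sum_sub_distrib]
  congr 1 <;> exact Finset.sum_comm

lemma form_oddRoot (m n : ℕ) (c a : Fin m) (d b : Fin n) :
    form m n (oddRoot m n c d) (oddRoot m n a b)
      = (if c = a then (1:ℤ) else 0) - (if d = b then (1:ℤ) else 0) := by
  simp only [form, oddRoot, ite_and, mul_ite, ite_mul, one_mul, mul_one, zero_mul, mul_zero,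
    Finset.sum_ite_eq, Finset.mem_univ, if_true]
  simp only [eq_comm]; split_ifs <;> simp_all


/-- For an enumeration `β_1, …, β_{mn}` of the positive odd roots compatible
with the partial order (`β_i ⪯ β_j → i ≤ j`, where
`ε_i - δ_j ⪯ ε_a - δ_b` iff `a ≤ i` and `b ≥ j`), one has, writing
`β_k = ε_a - δ_b` (1-based), `⟨Σ_{i<k} β_i, β_k⟩ = a + b - m - 1`;
equivalently `⟨Σ_{i<k} β_i, β_k⟩ = -⟨ρ, β_k⟩` since
`⟨2ρ, ε_a - δ_b⟩ = 2(m + 1 - a - b)`.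
(In 0-based indexing `a + b - m - 1` becomes `a + b + 1 - m`.) -/
theorem odd_root_partial_sum_pairing
    (m n : ℕ) (hm : 1 ≤ m) (hn : 1 ≤ n)
    (β : Fin (m * n) ≃ Fin m × Fin n)
    (hord : ∀ i j : Fin (m * n),
      (β j).1 ≤ (β i).1 → (β i).2 ≤ (β j).2 → i ≤ j)
    (k : Fin (m * n)) :
    form m n
        (∑ i ∈ Finset.univ.filter (fun i : Fin (m * n) => i < k),
          oddRoot m n (β i).1 (β i).2)
        (oddRoot m n (β k).1 (β k).2)
      = (((β k).1 : ℕ) : ℤ) + (((β k).2 : ℕ) : ℤ) + 1 - m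
    ∧ 2 * form m n
        (∑ i ∈ Finset.univ.filter (fun i : Fin (m * n) => i < k),
          oddRoot m n (β i).1 (β i).2)
        (oddRoot m n (β k).1 (β k).2)
      = - form m n (twoRho m n) (oddRoot m n (β k).1 (β k).2) := by
  have ha : (β k).1 < m := (β k).1.isLt
  have hb : (β k).2 < n := (β k).2.isLt
  have key : form m n
      (∑ i ∈ Finset.univ.filter (fun i : Fin (m * n) => i < k),
        oddRoot m n (β i).1 (β i).2) (oddRoot m n (β k).1 (β k).2)
      = (((Finset.univ.filter (fun i : Fin (m*n) => i < k ∧ (β i).1 = (β k).1)).card : ℤ))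
        - (((Finset.univ.filter (fun i : Fin (m*n) => i < k ∧ (β i).2 = (β k).2)).card : ℤ)) := by
    rw [form_sum]
    simp only [form_oddRoot, Finset.sum_sub_distrib, Finset.sum_boole, Finset.filter_filter]
  have hcard1 : (Finset.univ.filter (fun i : Fin (m*n) => i < k ∧ (β i).1 = (β k).1)).card
      = ((β k).2 : ℕ) := by
    rw [← Fin.card_Iio (β k).2]
    apply Finset.card_bij (fun i _ => (β i).2)
    · intro i hi
      simp only [Finset.mem_filter, Finset.mem_univ, true_and] at hi
      simp only [Finset.mem_Iio]
      by_contra h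
      exact absurd (hord k i (le_of_eq hi.2) (le_of_not_gt h)) (not_le.2 hi.1)
    · intro i hi j hj hij
      simp only [Finset.mem_filter, Finset.mem_univ, true_and] at hi hj
      exact β.injective (Prod.ext (hi.2.trans hj.2.symm) hij)
    · intro b' hb'
      simp only [Finset.mem_Iio] at hb'
      refine ⟨β.symm ((β k).1, b'), ?_, ?_⟩
      · simp only [Finset.mem_filter, Finset.mem_univ, true_and, Equiv.apply_symm_apply]
        refine ⟨lt_of_le_of_ne ?_ ?_, trivial⟩
        · exact hord _ k (by simp) (by simp [le_of_lt hb'])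
        · intro h
          apply_fun β at h
          rw [Equiv.apply_symm_apply] at h
          exact ne_of_lt hb' (congrArg Prod.snd h)
      · simp [Equiv.apply_symm_apply]
  have hcard2 : (Finset.univ.filter (fun i : Fin (m*n) => i < k ∧ (β i).2 = (β k).2)).card
      = m - 1 - ((β k).1 : ℕ) := by
    rw [← Fin.card_Ioi (β k).1]
    apply Finset.card_bij (fun i _ => (β i).1)
    · intro i hi
      simp only [Finset.mem_filter, Finset.mem_univ, true_and] at hi
      simp only [Finset.mem_Ioi]
      by_contra h
      exact absurd (hord k i (le_of_not_gt h) (le_of_eq hi.2.symm)) (not_le.2 hi.1)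
    · intro i hi j hj hij
      simp only [Finset.mem_filter, Finset.mem_univ, true_and] at hi hj
      exact β.injective (Prod.ext hij (hi.2.trans hj.2.symm))
    · intro a' ha'
      simp only [Finset.mem_Ioi] at ha'
      refine ⟨β.symm (a', (β k).2), ?_, ?_⟩
      · simp only [Finset.mem_filter, Finset.mem_univ, true_and, Equiv.apply_symm_apply]
        refine ⟨lt_of_le_of_ne ?_ ?_, trivial⟩
        · exact hord _ k (by simp [le_of_lt ha']) (by simp)
        · intro h
          apply_fun β at h
          rw [Equiv.apply_symm_apply] at h
          exact ne_of_gt ha' (congrArg Prod.fst h)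
      · simp [Equiv.apply_symm_apply]
  have htwoRho : form m n (twoRho m n) (oddRoot m n (β k).1 (β k).2)
      = ((m : ℤ) - n - 1 - 2 * ((β k).1 : ℕ)) + ((m : ℤ) + n - 1 - 2 * ((β k).2 : ℕ)) := by
    simp only [form, twoRho, oddRoot, mul_ite, mul_one, mul_zero, mul_neg, mul_neg_one,
      Finset.sum_ite_eq', Finset.mem_univ, if_true, sub_neg_eq_add]
  have h1 : form m n
      (∑ i ∈ Finset.univ.filter (fun i : Fin (m * n) => i < k),
        oddRoot m n (β i).1 (β i).2) (oddRoot m n (β k).1 (β k).2)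
      = (((β k).1 : ℕ) : ℤ) + (((β k).2 : ℕ) : ℤ) + 1 - m := by
    rw [key, hcard1, hcard2]
    omega
  exact ⟨h1, by rw [h1, htwoRho]; push_cast; ring⟩
end

section
/- Let p be a prime, m, n ≥ 1, and let β_1, …, β_{mn} be an enumeration of the positive odd roots such that β_i ⪯ β_j implies i ≤ j. Let λ = (μ|ν) ∈ ℤ^{m+n}. Define λ^{(0)} = λ and, for k = 1, …, mn, set λ^{(k)} = λ^{(k−1)} − β_k if ⟨λ^{(k−1)}, β_k⟩ ≢ 0 (mod p) and λ^{(k)} = λ^{(k−1)} otherwise (Serganova's algorithm). Then λ^{(mn)} = λ − Σ_{k=1}^{mn} β_k if and only if ⟨λ + ρ, β_k⟩ ≢ 0 (mod p) for every k = 1, …, mn; explicitly, if and only if μ_a + ν_b + m + 1 − a − b ≢ 0 (mod p) for all 1 ≤ a ≤ m and 1 ≤ b ≤ n. -/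
lemma form_oddRoot_s6 {m n : ℕ} (v : SuperWeight m n) (a : Fin m) (b : Fin n) :
    form m n v (oddRoot m n a b) = v.1 a + v.2 b := by
  simp [form, oddRoot, mul_ite, Finset.sum_ite_eq', sub_neg_eq_add]

lemma form_sub {m n : ℕ} (v w r : SuperWeight m n) :
    form m n (v - w) r = form m n v r - form m n w r := by
  simp only [form, Prod.fst_sub, Prod.snd_sub, Pi.sub_apply, sub_mul,
    Finset.sum_sub_distrib]
  ring

section
variable {m n : ℕ} (β : Fin (m * n) ≃ Fin m × Fin n)
  (hord : ∀ i j : Fin (m * n), (β j).1 ≤ (β i).1 → (β i).2 ≤ (β j).2 → i ≤ j)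

include hord

lemma count_fst (k : Fin (m * n)) :
    (Finset.univ.filter
        (fun i : Fin (m * n) => (i : ℕ) < (k : ℕ) ∧ (β i).1 = (β k).1)).card
      = ((β k).2 : ℕ) := by
  rw [show ((β k).2 : ℕ) = (Finset.univ.filter
      (fun y : Fin n => y < (β k).2)).card by
    rw [show Finset.univ.filter (fun y : Fin n => y < (β k).2) = Finset.Iio (β k).2 by
      ext; simp]
    exact (Fin.card_Iio _).symm]
  apply Finset.card_bij' (fun i _ => (β i).2)
    (fun y _ => β.symm ((β k).1, y))
  · intro i hi
    simp only [Finset.mem_filter, Finset.mem_univ, true_and] at hi ⊢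
    by_contra hlt
    push_neg at hlt
    have := hord k i (le_of_eq hi.2) hlt
    exact absurd hi.1 (by omega)
  · intro y hy
    simp only [Finset.mem_filter, Finset.mem_univ, true_and] at hy ⊢
    set i := β.symm ((β k).1, y) with hi
    have hβi : β i = ((β k).1, y) := β.apply_symm_apply _
    have h1 : i ≤ k := hord i k (by rw [hβi]) (by rw [hβi]; exact le_of_lt hy)
    have h2 : i ≠ k := by
      intro hik
      rw [hik] at hβi
      exact absurd (congrArg Prod.snd hβi).symm (ne_of_lt hy)
    have h3 : i < k := lt_of_le_of_ne h1 h2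
    exact ⟨h3, by rw [hβi]⟩
  · intro i hi
    simp only [Finset.mem_filter, Finset.mem_univ, true_and] at hi
    have : ((β k).1, (β i).2) = β i := by
      rw [← hi.2]
    rw [this, β.symm_apply_apply]
  · intro y hy
    rw [β.apply_symm_apply]

lemma count_snd (k : Fin (m * n)) :
    (Finset.univ.filter
        (fun i : Fin (m * n) => (i : ℕ) < (k : ℕ) ∧ (β i).2 = (β k).2)).card
      = m - 1 - ((β k).1 : ℕ) := by
  rw [show m - 1 - ((β k).1 : ℕ) = (Finset.univ.filter
      (fun x : Fin m => (β k).1 < x)).card by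
    rw [show Finset.univ.filter (fun x : Fin m => (β k).1 < x) = Finset.Ioi (β k).1 by
      ext; simp]
    exact (Fin.card_Ioi _).symm]
  apply Finset.card_bij' (fun i _ => (β i).1)
    (fun x _ => β.symm (x, (β k).2))
  · intro i hi
    simp only [Finset.mem_filter, Finset.mem_univ, true_and] at hi ⊢
    by_contra hlt
    push_neg at hlt
    have := hord k i hlt (le_of_eq hi.2.symm)
    exact absurd hi.1 (by omega)
  · intro x hx
    simp only [Finset.mem_filter, Finset.mem_univ, true_and] at hx ⊢
    set i := β.symm (x, (β k).2) with hi
    have hβi : β i = (x, (β k).2) := β.apply_symm_apply _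
    have h1 : i ≤ k := hord i k (by rw [hβi]; exact le_of_lt hx) (by rw [hβi])
    have h2 : i ≠ k := by
      intro hik
      rw [hik] at hβi
      exact absurd (congrArg Prod.fst hβi).symm (ne_of_gt hx)
    have h3 : i < k := lt_of_le_of_ne h1 h2
    exact ⟨h3, by rw [hβi]⟩
  · intro i hi
    simp only [Finset.mem_filter, Finset.mem_univ, true_and] at hi
    have : ((β i).1, (β k).2) = β i := by
      rw [← hi.2]
    rw [this, β.symm_apply_apply]
  · intro x hx
    rw [β.apply_symm_apply]

lemma sum_fst_eval (k : Fin (m * n)) :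
    (∑ i ∈ Finset.univ.filter (fun i : Fin (m * n) => (i : ℕ) < (k : ℕ)),
        oddRoot m n (β i).1 (β i).2).1 (β k).1 = (((β k).2 : ℕ) : ℤ) := by
  rw [Prod.fst_sum, Finset.sum_apply]
  have h0 : ∀ i : Fin (m * n),
      (oddRoot m n (β i).1 (β i).2).1 (β k).1
        = if (β i).1 = (β k).1 then (1 : ℤ) else 0 := by
    intro i
    simp [oddRoot, eq_comm]
  simp only [h0, Finset.sum_boole, Finset.filter_filter]
  rw [count_fst β hord k]

lemma sum_snd_eval (k : Fin (m * n)) :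
    (∑ i ∈ Finset.univ.filter (fun i : Fin (m * n) => (i : ℕ) < (k : ℕ)),
        oddRoot m n (β i).1 (β i).2).2 (β k).2
      = -(((m - 1 - ((β k).1 : ℕ) : ℕ)) : ℤ) := by
  rw [Prod.snd_sum, Finset.sum_apply]
  have h0 : ∀ i : Fin (m * n),
      (oddRoot m n (β i).1 (β i).2).2 (β k).2
        = -(if (β i).2 = (β k).2 then (1 : ℤ) else 0) := by
    intro i
    rcases eq_or_ne (β i).2 (β k).2 with h | h
    · simp [oddRoot, h]
    · simp [oddRoot, h, Ne.symm h]
  simp only [h0, Finset.sum_neg_distrib, Finset.sum_boole, Finset.filter_filter]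
  rw [count_snd β hord k]

lemma key_form (μ : Fin m → ℤ) (ν : Fin n → ℤ) (k : Fin (m * n)) :
    form m n (((μ, ν) : SuperWeight m n)
        - ∑ i ∈ Finset.univ.filter (fun i : Fin (m * n) => (i : ℕ) < (k : ℕ)),
            oddRoot m n (β i).1 (β i).2)
      (oddRoot m n (β k).1 (β k).2)
      = μ (β k).1 + ν (β k).2 + m - 1 - (((β k).1 : ℕ) : ℤ) - (((β k).2 : ℕ) : ℤ) := by
  rw [form_sub, form_oddRoot_s6, form_oddRoot_s6, sum_fst_eval β hord, sum_snd_eval β hord]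
  have h1 : ((β k).1 : ℕ) < m := (β k).1.isLt
  have h2 : (((m - 1 - ((β k).1 : ℕ) : ℕ)) : ℤ) = (m : ℤ) - 1 - (((β k).1 : ℕ) : ℤ) := by
    omega
  rw [h2]
  ring

end

/-- Serganova's algorithm: starting from `λ^{(0)} = λ = (μ|ν)` and setting
`λ^{(k)} = λ^{(k-1)} - β_k` if `⟨λ^{(k-1)}, β_k⟩ ≢ 0 (mod p)` and
`λ^{(k)} = λ^{(k-1)}` otherwise, one has
`λ^{(mn)} = λ - Σ_k β_k` iff `⟨λ + ρ, β_k⟩ ≢ 0 (mod p)` for all `k`;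
explicitly, iff `μ_a + ν_b + m + 1 - a - b ≢ 0 (mod p)` for all `a, b`
(in 0-based indexing: `μ a + ν b + m - 1 - a - b ≢ 0 (mod p)`).
Here `β : Fin (m*n) ≃ Fin m × Fin n` is any enumeration of the positive odd
roots compatible with the partial order `ε_i - δ_j ⪯ ε_a - δ_b ⇔ a ≤ i ∧ b ≥ j`. -/
theorem serganova_algorithm_reaches_lowest_iff
    (p m n : ℕ) (hp : p.Prime) (hm : 1 ≤ m) (hn : 1 ≤ n)
    (β : Fin (m * n) ≃ Fin m × Fin n)
    (hord : ∀ i j : Fin (m * n),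
      (β j).1 ≤ (β i).1 → (β i).2 ≤ (β j).2 → i ≤ j)
    (μ : Fin m → ℤ) (ν : Fin n → ℤ)
    (L : ℕ → SuperWeight m n)
    (hL0 : L 0 = (μ, ν))
    (hLs : ∀ k : Fin (m * n),
      (¬ ((p : ℤ) ∣ form m n (L k) (oddRoot m n (β k).1 (β k).2)) →
        L ((k : ℕ) + 1) = L k - oddRoot m n (β k).1 (β k).2) ∧
      (((p : ℤ) ∣ form m n (L k) (oddRoot m n (β k).1 (β k).2)) →
        L ((k : ℕ) + 1) = L k)) :
    L (m * n) = (μ, ν) - ∑ k : Fin (m * n), oddRoot m n (β k).1 (β k).2 ↔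
      ∀ (a : Fin m) (b : Fin n),
        ¬ ((p : ℤ) ∣
          (μ a + ν b + m - 1 - ((a : ℕ) : ℤ) - ((b : ℕ) : ℤ))) := by
  -- partial sums of roots
  have hFstep : ∀ (k : ℕ) (hk : k < m * n),
      (∑ i ∈ Finset.univ.filter (fun i : Fin (m * n) => (i : ℕ) < k + 1),
          oddRoot m n (β i).1 (β i).2)
        = (∑ i ∈ Finset.univ.filter (fun i : Fin (m * n) => (i : ℕ) < k),
            oddRoot m n (β i).1 (β i).2)
          + oddRoot m n (β ⟨k, hk⟩).1 (β ⟨k, hk⟩).2 := by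
    intro k hk
    have hins : Finset.univ.filter (fun i : Fin (m * n) => (i : ℕ) < k + 1)
        = insert (⟨k, hk⟩ : Fin (m * n))
            (Finset.univ.filter (fun i : Fin (m * n) => (i : ℕ) < k)) := by
      ext i
      simp only [Finset.mem_filter, Finset.mem_univ, true_and, Finset.mem_insert,
        Fin.ext_iff]
      omega
    rw [hins, Finset.sum_insert (by simp)]
    abel
  have hFall : (∑ i ∈ Finset.univ.filter (fun i : Fin (m * n) => (i : ℕ) < m * n),
        oddRoot m n (β i).1 (β i).2)
      = ∑ k : Fin (m * n), oddRoot m n (β k).1 (β k).2 := by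
    rw [Finset.filter_true_of_mem (fun i _ => i.isLt)]
  constructor
  · -- forward direction
    intro hL
    -- build the set of steps at which the algorithm subtracted
    have exS : ∀ k, k ≤ m * n → ∃ S : Finset (Fin (m * n)),
        (∀ i ∈ S, (i : ℕ) < k) ∧
        L k = (μ, ν) - ∑ i ∈ S, oddRoot m n (β i).1 (β i).2 ∧
        ∀ i : Fin (m * n), (i : ℕ) < k →
          ((i ∈ S) ↔ ¬ ((p : ℤ) ∣ form m n (L i) (oddRoot m n (β i).1 (β i).2))) := by
      intro k
      induction k with
      | zero =>
        intro _
        exact ⟨∅, by simp, by simp [hL0], by simp⟩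
      | succ k ih =>
        intro hk
        have hk' : k < m * n := hk
        obtain ⟨S, hS1, hS2, hS3⟩ := ih (Nat.le_of_lt hk')
        by_cases hdiv : (p : ℤ) ∣ form m n (L k) (oddRoot m n (β ⟨k, hk'⟩).1 (β ⟨k, hk'⟩).2)
        · have hstep : L (k + 1) = L k := (hLs ⟨k, hk'⟩).2 hdiv
          refine ⟨S, fun i hi => Nat.lt_succ_of_lt (hS1 i hi), by rw [hstep]; exact hS2, ?_⟩
          intro i hik1
          rcases Nat.lt_succ_iff_lt_or_eq.mp hik1 with hik | hik
          · exact hS3 i hik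
          · have hieq : i = ⟨k, hk'⟩ := Fin.ext hik
            subst hieq
            constructor
            · intro hiS
              exact absurd (hS1 _ hiS) (by simp only [Fin.val_mk]; omega)
            · intro hnd
              exact absurd hdiv hnd
        · have hstep : L (k + 1) = L k - oddRoot m n (β ⟨k, hk'⟩).1 (β ⟨k, hk'⟩).2 :=
            (hLs ⟨k, hk'⟩).1 hdiv
          have hkfS : (⟨k, hk'⟩ : Fin (m * n)) ∉ S := fun hmem => absurd (hS1 _ hmem) (by simp only [Fin.val_mk]; omega)
          refine ⟨insert ⟨k, hk'⟩ S, ?_, ?_, ?_⟩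
          · intro i hi
            rcases Finset.mem_insert.mp hi with h' | h'
            · subst h'; exact Nat.lt_succ_self k
            · exact Nat.lt_succ_of_lt (hS1 i h')
          · rw [hstep, hS2, Finset.sum_insert hkfS]
            abel
          · intro i hik1
            rcases Nat.lt_succ_iff_lt_or_eq.mp hik1 with hik | hik
            · rw [Finset.mem_insert]
              constructor
              · rintro (h' | h')
                · exact absurd (congrArg Fin.val h') (by simp only [Fin.val_mk]; omega)
                · exact (hS3 i hik).mp h'
              · intro hnd
                exact Or.inr ((hS3 i hik).mpr hnd)
            · have hieq : i = ⟨k, hk'⟩ := Fin.ext hik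
              subst hieq
              simp [hdiv]
    obtain ⟨S, hS1, hS2, hS3⟩ := exS (m * n) le_rfl
    -- the two expressions for L (m*n) force S = univ
    have hsum : (∑ i ∈ S, oddRoot m n (β i).1 (β i).2)
        = ∑ k : Fin (m * n), oddRoot m n (β k).1 (β k).2 := by
      have h' : (μ, ν) - (∑ i ∈ S, oddRoot m n (β i).1 (β i).2)
          = (μ, ν) - ∑ k : Fin (m * n), oddRoot m n (β k).1 (β k).2 := by
        rw [← hS2, hL]
      exact sub_right_injective h'
    have hSuniv : S = Finset.univ := by
      by_contra hne
      obtain ⟨i0, hi0⟩ : ∃ i0, i0 ∉ S := by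
        by_contra h'
        push_neg at h'
        exact hne (Finset.eq_univ_iff_forall.mpr h')
      have hzero : (∑ i ∈ Finset.univ \ S, oddRoot m n (β i).1 (β i).2) = 0 := by
        have hsd := Finset.sum_sdiff (f := fun i => oddRoot m n (β i).1 (β i).2)
          (Finset.subset_univ S)
        rw [hsum] at hsd
        exact add_right_cancel (hsd.trans (zero_add _).symm)
      have hz1 : (∑ i ∈ Finset.univ \ S,
          (oddRoot m n (β i).1 (β i).2).1 (β i0).1) = 0 := by
        have := congrArg (fun v : SuperWeight m n => v.1 (β i0).1) hzero
        simpa [Prod.fst_sum, Finset.sum_apply] using this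
      have hterm : ∀ i ∈ Finset.univ \ S,
          (0 : ℤ) ≤ (oddRoot m n (β i).1 (β i).2).1 (β i0).1 := by
        intro i _
        simp only [oddRoot]
        split <;> norm_num
      have hall := (Finset.sum_eq_zero_iff_of_nonneg hterm).mp hz1
      have hi0mem : i0 ∈ Finset.univ \ S := Finset.mem_sdiff.mpr ⟨Finset.mem_univ _, hi0⟩
      have := hall i0 hi0mem
      simp [oddRoot] at this
    have hnd : ∀ k : Fin (m * n),
        ¬ ((p : ℤ) ∣ form m n (L k) (oddRoot m n (β k).1 (β k).2)) :=
      fun k => (hS3 k k.isLt).mp (hSuniv ▸ Finset.mem_univ k)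
    -- since every step subtracted, L k is the full partial sum
    have main : ∀ k, k ≤ m * n →
        L k = (μ, ν) - ∑ i ∈ Finset.univ.filter (fun i : Fin (m * n) => (i : ℕ) < k),
          oddRoot m n (β i).1 (β i).2 := by
      intro k
      induction k with
      | zero => intro _; rw [hL0]; simp
      | succ k ih =>
        intro hk
        have hk' : k < m * n := hk
        have hstep : L (k + 1) = L k - oddRoot m n (β ⟨k, hk'⟩).1 (β ⟨k, hk'⟩).2 :=
          (hLs ⟨k, hk'⟩).1 (hnd ⟨k, hk'⟩)
        rw [hstep, ih (Nat.le_of_lt hk'), hFstep k hk', sub_add_eq_sub_sub]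
    intro a b
    set k := β.symm (a, b) with hkdef
    have hβk : β k = (a, b) := β.apply_symm_apply _
    have hthis := hnd k
    have hLk : L k = (μ, ν) - ∑ i ∈ Finset.univ.filter
        (fun i : Fin (m * n) => (i : ℕ) < (k : ℕ)), oddRoot m n (β i).1 (β i).2 :=
      main k (Nat.le_of_lt k.isLt)
    rw [hLk, key_form β hord μ ν k, hβk] at hthis
    exact hthis
  · -- backward direction
    intro h
    have main : ∀ k, k ≤ m * n →
        L k = (μ, ν) - ∑ i ∈ Finset.univ.filter (fun i : Fin (m * n) => (i : ℕ) < k),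
          oddRoot m n (β i).1 (β i).2 := by
      intro k
      induction k with
      | zero => intro _; rw [hL0]; simp
      | succ k ih =>
        intro hk
        have hk' : k < m * n := hk
        have ihk := ih (Nat.le_of_lt hk')
        have hnd : ¬ ((p : ℤ) ∣ form m n (L k)
            (oddRoot m n (β ⟨k, hk'⟩).1 (β ⟨k, hk'⟩).2)) := by
          rw [ihk]
          have hkey := key_form β hord μ ν ⟨k, hk'⟩
          rw [show ((⟨k, hk'⟩ : Fin (m * n)) : ℕ) = k from rfl] at hkey
          rw [hkey]
          exact h _ _
        have hstep : L (k + 1) = L k - oddRoot m n (β ⟨k, hk'⟩).1 (β ⟨k, hk'⟩).2 :=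
          (hLs ⟨k, hk'⟩).1 hnd
        rw [hstep, ihk, hFstep k hk', sub_add_eq_sub_sub]
    rw [main (m * n) le_rfl, hFall]
end

section
/- Let p be a prime, 1 ≤ n ≤ p − 1, and r = p − n. Let π = (π_1, …, π_r) be integers with n ≥ π_1 ≥ π_2 ≥ … ≥ π_r ≥ 0, and let π^t ∈ ℤ^n be the transpose partition, (π^t)_j = #{ i : π_i ≥ j } for j = 1, …, n. Then Σ_{i=1}^r π_i(π_i + r + 1 − 2i) + Σ_{j=1}^n (π^t)_j((π^t)_j + n + 1 − 2j) ≡ 0 (mod p); that is, ⟨π + 2ρ^{(r)}, π⟩ ≡ −⟨π^t + 2ρ^{(n)}, π^t⟩ (mod p). -/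
lemma gauss_sum (c : ℤ) (k : ℕ) :
    ∑ j ∈ Finset.range k, (2 * (j : ℤ) + c) = k * (k + c - 1) := by
  induction k with
  | zero => simp
  | succ m ih => rw [Finset.sum_range_succ, ih]; push_cast; ring

lemma filter_lt_sum (c : ℤ) {m N : ℕ} (hm : m ≤ N) :
    ∑ j : Fin N, (if ((j : ℕ) : ℤ) + 1 ≤ (m : ℤ) then 2 * ((j : ℕ) : ℤ) + c else 0)
      = (m : ℤ) * (m + c - 1) := by
  rw [Fin.sum_univ_eq_sum_range (fun j => if ((j:ℕ):ℤ) + 1 ≤ (m:ℤ) then 2*((j:ℕ):ℤ) + c else 0)]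
  rw [← gauss_sum c m, ← Finset.sum_filter]
  congr 1
  ext j
  simp only [Finset.mem_filter, Finset.mem_range]
  omega

lemma downward_closed_eq {r : ℕ} (S : Finset (Fin r))
    (hS : ∀ i j : Fin r, i ≤ j → j ∈ S → i ∈ S) :
    S = Finset.univ.filter (fun i : Fin r => (i : ℕ) < S.card) := by
  ext i
  simp only [Finset.mem_filter, Finset.mem_univ, true_and]
  constructor
  · intro hi
    have hsub : Finset.univ.filter (fun i' : Fin r => i' ≤ i) ⊆ S := by
      intro i' hi'
      simp only [Finset.mem_filter, Finset.mem_univ, true_and] at hi'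
      exact hS i' i hi' hi
    have hc := Finset.card_le_card hsub
    have : (Finset.univ.filter (fun i' : Fin r => i' ≤ i)).card = (i : ℕ) + 1 := by
      rw [← Fin.card_Iic i]
      congr 1
      ext x
      simp [Finset.mem_Iic]
    omega
  · intro hi
    by_contra hni
    have hsub : S ⊆ Finset.univ.filter (fun i' : Fin r => i' < i) := by
      intro i' hi'
      simp only [Finset.mem_filter, Finset.mem_univ, true_and]
      by_contra h
      exact hni (hS i i' (le_of_not_gt h) hi')
    have hc := Finset.card_le_card hsub
    have : (Finset.univ.filter (fun i' : Fin r => i' < i)).card = (i : ℕ) := by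
      rw [← Fin.card_Iio i]
      congr 1
      ext x
      simp [Finset.mem_Iio]
    omega

/-- For a partition `π` fitting in the `n × (p-n)` box (`r = p - n`,
`n ≥ π_1 ≥ … ≥ π_r ≥ 0`), with transpose `(π^t)_j = #{i : π_i ≥ j}`,
one has `⟨π + 2ρ^{(r)}, π⟩ + ⟨π^t + 2ρ^{(n)}, π^t⟩ ≡ 0 (mod p)`, where for
`λ ∈ ℤ^k` (1-based) `⟨λ + 2ρ^{(k)}, λ⟩ = Σ_i λ_i (λ_i + k + 1 - 2i)`
(in 0-based indexing `Σ_i λ_i (λ_i + k - 1 - 2i)`). -/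
theorem levelrank_casimir_congruence
    (p n r : ℕ) (hp : p.Prime) (hn : 1 ≤ n) (hnp : n ≤ p - 1) (hr : r = p - n)
    (π : Fin r → ℤ)
    (hdec : ∀ i j : Fin r, i ≤ j → π j ≤ π i)
    (hub : ∀ i : Fin r, π i ≤ (n : ℤ)) (hlb : ∀ i : Fin r, 0 ≤ π i) :
    (∑ i : Fin r, π i * (π i + (r : ℤ) - 1 - 2 * ((i : ℕ) : ℤ))) +
      (∑ j : Fin n,
        ((Finset.univ.filter fun i : Fin r => ((j : ℕ) : ℤ) + 1 ≤ π i).card : ℤ) *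
        (((Finset.univ.filter fun i : Fin r => ((j : ℕ) : ℤ) + 1 ≤ π i).card : ℤ)
          + (n : ℤ) - 1 - 2 * ((j : ℕ) : ℤ)))
      ≡ 0 [ZMOD (p : ℤ)] := by
  have hp2 := hp.two_le
  have hnr : n + r = p := by omega
  have h1 : ∀ i : Fin r, π i * (π i + (r : ℤ) - 1 - 2 * ((i : ℕ) : ℤ)) =
      ∑ j : Fin n, (if ((j : ℕ) : ℤ) + 1 ≤ π i
        then 2 * ((j : ℕ) : ℤ) + ((r : ℤ) - 2 * ((i : ℕ) : ℤ)) else 0) := by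
    intro i
    have hm : ((π i).toNat : ℤ) = π i := Int.toNat_of_nonneg (hlb i)
    have hmn : (π i).toNat ≤ n := by
      have := hub i; omega
    rw [← hm, filter_lt_sum ((r : ℤ) - 2 * ((i : ℕ) : ℤ)) hmn]
    ring
  have h2 : ∀ j : Fin n,
      ((Finset.univ.filter fun i : Fin r => ((j : ℕ) : ℤ) + 1 ≤ π i).card : ℤ) *
        (((Finset.univ.filter fun i : Fin r => ((j : ℕ) : ℤ) + 1 ≤ π i).card : ℤ)
          + (n : ℤ) - 1 - 2 * ((j : ℕ) : ℤ)) =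
      ∑ i : Fin r, (if ((j : ℕ) : ℤ) + 1 ≤ π i
        then 2 * ((i : ℕ) : ℤ) + ((n : ℤ) - 2 * ((j : ℕ) : ℤ)) else 0) := by
    intro j
    set S := Finset.univ.filter fun i : Fin r => ((j : ℕ) : ℤ) + 1 ≤ π i with hSdef
    have hdc : ∀ i i' : Fin r, i ≤ i' → i' ∈ S → i ∈ S := by
      intro i i' hle hi'
      simp only [hSdef, Finset.mem_filter, Finset.mem_univ, true_and] at hi' ⊢
      exact le_trans hi' (hdec i i' hle)
    have hSeq := downward_closed_eq S hdc
    have hcard : S.card ≤ r := by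
      simpa using Finset.card_le_univ S
    have hiff : ∀ i : Fin r, (((j : ℕ) : ℤ) + 1 ≤ π i) ↔ (((i : ℕ) : ℤ) + 1 ≤ (S.card : ℤ)) := by
      intro i
      constructor
      · intro h
        have hmem : i ∈ S := by simp only [hSdef, Finset.mem_filter, Finset.mem_univ, true_and]; exact h
        rw [hSeq] at hmem
        simp only [Finset.mem_filter, Finset.mem_univ, true_and] at hmem
        omega
      · intro h
        have hmem : i ∈ Finset.univ.filter (fun i' : Fin r => (i' : ℕ) < S.card) := by
          simp only [Finset.mem_filter, Finset.mem_univ, true_and]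
          omega
        rw [← hSeq] at hmem
        simpa [hSdef] using hmem
    calc (S.card : ℤ) * ((S.card : ℤ) + (n : ℤ) - 1 - 2 * ((j : ℕ) : ℤ))
        = (S.card : ℤ) * ((S.card : ℤ) + ((n : ℤ) - 2 * ((j : ℕ) : ℤ)) - 1) := by ring
      _ = ∑ i : Fin r, (if ((i : ℕ) : ℤ) + 1 ≤ (S.card : ℤ)
            then 2 * ((i : ℕ) : ℤ) + ((n : ℤ) - 2 * ((j : ℕ) : ℤ)) else 0) :=
          (filter_lt_sum ((n : ℤ) - 2 * ((j : ℕ) : ℤ)) hcard).symm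
      _ = _ := Finset.sum_congr rfl fun i _ => by rw [if_congr (hiff i).symm rfl rfl]
  rw [Finset.sum_congr rfl fun i _ => h1 i, Finset.sum_congr rfl fun j _ => h2 j]
  rw [Finset.sum_comm, ← Finset.sum_add_distrib]
  have hsum : ∀ j : Fin n,
      ((∑ i : Fin r, (if ((j : ℕ) : ℤ) + 1 ≤ π i
          then 2 * ((j : ℕ) : ℤ) + ((r : ℤ) - 2 * ((i : ℕ) : ℤ)) else 0)) +
        ∑ i : Fin r, (if ((j : ℕ) : ℤ) + 1 ≤ π i
          then 2 * ((i : ℕ) : ℤ) + ((n : ℤ) - 2 * ((j : ℕ) : ℤ)) else 0)) =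
      ∑ i : Fin r, (if ((j : ℕ) : ℤ) + 1 ≤ π i then (p : ℤ) else 0) := by
    intro j
    rw [← Finset.sum_add_distrib]
    refine Finset.sum_congr rfl fun i _ => ?_
    split
    · have : ((n : ℤ) + (r : ℤ)) = (p : ℤ) := by exact_mod_cast congrArg (Nat.cast : ℕ → ℤ) hnr
      linarith
    · ring
  rw [Finset.sum_congr rfl fun j _ => hsum j]
  have hdvd : (p : ℤ) ∣ ∑ j : Fin n, ∑ i : Fin r,
      (if ((j : ℕ) : ℤ) + 1 ≤ π i then (p : ℤ) else 0) := by
    refine Finset.dvd_sum fun j _ => Finset.dvd_sum fun i _ => ?_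
    split
    · exact dvd_refl _
    · exact dvd_zero _
  exact (Int.modEq_zero_iff_dvd).mpr hdvd
end

section
/- Let p be a prime and 1 ≤ n ≤ p − 1. For a degree-zero admissible weight λ ∈ ℤ^n (λ_1 ≥ … ≥ λ_n, Σ λ_i = 0, λ_1 − λ_n ≤ p − n) with associated pair of partitions (α, β), define D(λ) ∈ ℤ^{p−n} to be the degree-zero weight whose associated pair of partitions is (α^t, β^t). Then D is well defined — i.e. (α^t, β^t) satisfies ℓ(α^t) + ℓ(β^t) ≤ p − n, |α^t| = |β^t|, and (α^t)_1 + (β^t)_1 ≤ n — and D is a bijection from the set of degree-zero admissible weights in ℤ^n onto the set of degree-zero admissible weights in ℤ^{p−n}. (This is the combinatorial form of the level-rank duality Ver_p(PGL_n) ≃ Ver_p(PGL_{p−n}) on simple objects.) -/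
/-- A partition, encoded as a weakly decreasing list of positive integers. -/
def IsPartitionList (a : List ℤ) : Prop :=
  a.Pairwise (· ≥ ·) ∧ ∀ x ∈ a, 0 < x

/-- The pair `(α, β)` associated to a weight `λ ∈ ℤ^n`: `α` is the tuple of
positive entries of `λ` and `β` is the tuple of negated negative entries of
`λ` taken in reverse order. -/
def toPair (n : ℕ) (l : Fin n → ℤ) : List ℤ × List ℤ :=
  ((List.ofFn l).filter (fun x => decide (0 < x)),
   (((List.ofFn l).filter (fun x => decide (x < 0))).reverse).map (fun x => -x))

/-- The transpose of a partition: `(α^t)_j = #{ i : α_i ≥ j }` for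
`j = 1, …, α_1`. -/
def transposeP (a : List ℤ) : List ℤ :=
  (List.range a.headI.toNat).map
    (fun j => ((a.filter (fun x => decide ((j : ℤ) + 1 ≤ x))).length : ℤ))

/-- The degree-zero weight in `ℤ^k` associated to a pair of partitions
`(α, β)`: the entries of `α`, then zeros, then the negated entries of `β`
in reverse order. -/
def weightOfPair (k : ℕ) (ab : List ℤ × List ℤ) : Fin k → ℤ :=
  fun i =>
    if h : (i : ℕ) < ab.1.length then ab.1.get ⟨(i : ℕ), h⟩
    else if h2 : k - 1 - (i : ℕ) < ab.2.length then
      -(ab.2.get ⟨k - 1 - (i : ℕ), h2⟩)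
    else 0

/-- Degree-zero admissible weights for `GL_k` in `Ver_p`: weakly decreasing,
summing to zero, with `λ_1 - λ_k ≤ p - k` (stated equivalently as
`l i - l j ≤ p - k` for all `i, j`). -/
def DZAdm (p k : ℕ) : Set (Fin k → ℤ) :=
  {l | (∀ i j : Fin k, i ≤ j → l j ≤ l i) ∧ (∑ i, l i) = 0 ∧
    ∀ i j : Fin k, l i - l j ≤ (p : ℤ) - k}

/-- The level-rank duality map `D`: if `λ` has associated pair of partitions
`(α, β)`, then `D(λ)` is the degree-zero weight in `ℤ^{p-n}` with associated
pair `(α^t, β^t)`. -/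
def levelRankD (p n : ℕ) (l : Fin n → ℤ) : Fin (p - n) → ℤ :=
  weightOfPair (p - n) (transposeP (toPair n l).1, transposeP (toPair n l).2)

lemma flatMap_pure_eq_map {α β : Type} (f : α → β) (l : List α) :
    (List.flatMap (fun a => pure (f a)) l) = List.map f l := by
  induction l with
  | nil => rfl
  | cons x t ih => rw [List.flatMap_cons, List.map_cons, ih]; rfl



lemma transposeP_eq (a : List ℤ) :
    transposeP a = (List.range a.headI.toNat).map
      (fun j : ℕ => ((a.filter (fun x : ℤ => decide ((j : ℤ) + 1 ≤ x))).length : ℤ)) := by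
  show List.map _ (List.flatMap (fun a => pure _) (List.range a.headI.toNat)) = _
  rw [flatMap_pure_eq_map, List.map_map]
  rfl

lemma transposeP_length (a : List ℤ) : (transposeP a).length = a.headI.toNat := by
  rw [transposeP_eq, List.length_map, List.length_range]

lemma headI_eq_get (l : List ℤ) (h : 0 < l.length) : l.headI = l.get ⟨0, h⟩ := by
  cases l with
  | nil => simp at h
  | cons x t => rfl

lemma get_le_headI (l : List ℤ) (h : l.Pairwise (· ≥ ·)) (i : Fin l.length) :
    l.get i ≤ l.headI := by
  have h0 : 0 < l.length := lt_of_le_of_lt (Nat.zero_le _) i.2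
  rw [headI_eq_get l h0]
  exact h.rel_get_of_le (Fin.mk_le_mk.mpr (Nat.zero_le _))

lemma headI_nonneg (a : List ℤ) (ha : IsPartitionList a) : 0 ≤ a.headI := by
  cases a with
  | nil => simp
  | cons x t => exact (ha.2 x (by simp)).le

lemma headI_pos (a : List ℤ) (ha : IsPartitionList a) (h : a ≠ []) : 0 < a.headI := by
  cases a with
  | nil => simp at h
  | cons x t => exact ha.2 x (by simp)

lemma mem_le_headI (a : List ℤ) (ha : a.Pairwise (· ≥ ·)) (x : ℤ) (hx : x ∈ a) : x ≤ a.headI := by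
  cases a with
  | nil => simp at hx
  | cons y t =>
    rcases List.mem_cons.mp hx with h | h
    · simp [h]
    · exact (List.pairwise_cons.mp ha).1 x h

lemma transposeP_get (a : List ℤ) (j : ℕ) (hj : j < (transposeP a).length) :
    (transposeP a).get ⟨j, hj⟩
      = ((a.filter (fun x => decide ((j : ℤ) + 1 ≤ x))).length : ℤ) := by
  simp only [transposeP_eq, List.get_eq_getElem, List.getElem_map, List.getElem_range]

lemma transposeP_partition (a : List ℤ) (ha : IsPartitionList a) :
    IsPartitionList (transposeP a) := by
  constructor
  · rw [List.pairwise_iff_get]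
    intro i j hij
    rw [transposeP_get, transposeP_get]
    have key : (a.filter (fun x => decide (((j : ℕ) : ℤ) + 1 ≤ x))).length
        ≤ (a.filter (fun x => decide (((i : ℕ) : ℤ) + 1 ≤ x))).length := by
      rw [← List.countP_eq_length_filter, ← List.countP_eq_length_filter]
      apply List.countP_mono_left
      intro x _ hx
      simp only [decide_eq_true_eq] at hx ⊢
      have : ((i : ℕ) : ℤ) ≤ ((j : ℕ) : ℤ) := by exact_mod_cast (le_of_lt hij)
      omega
    exact_mod_cast key
  · intro y hy
    rw [transposeP_eq] at hy
    simp only [List.mem_map, List.mem_range] at hy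
    obtain ⟨j, hj, rfl⟩ := hy
    cases a with
    | nil => simp at hj
    | cons x t =>
      have hx : (0:ℤ) < x := ha.2 x (by simp)
      have hjx : (j : ℤ) + 1 ≤ x := by
        simp only [List.headI] at hj; omega
      have : x ∈ (x :: t).filter (fun y => decide ((j : ℤ) + 1 ≤ y)) := by
        apply List.mem_filter.mpr
        exact ⟨by simp, by simpa using hjx⟩
      have hlen : 0 < ((x :: t).filter (fun y => decide ((j : ℤ) + 1 ≤ y))).length :=
        List.length_pos_iff.mpr (by intro hnil; rw [hnil] at this; simp at this)
      exact_mod_cast hlen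

lemma list_range_map_sum (h : ℕ) (f : ℕ → ℤ) :
    ((List.range h).map f).sum = ∑ j ∈ Finset.range h, f j := by
  induction h with
  | zero => simp
  | succ m ih =>
    rw [List.range_succ, Finset.sum_range_succ, List.map_append, List.sum_append, ih]; simp

lemma sum_ite_range (h : ℕ) (x : ℤ) (h1 : 0 < x) (h2 : x ≤ (h : ℤ)) :
    (∑ j ∈ Finset.range h, if (j : ℤ) + 1 ≤ x then (1:ℤ) else 0) = x := by
  induction h with
  | zero => simp at h2; omega
  | succ m ih =>
    rw [Finset.sum_range_succ]
    by_cases hc : (m : ℤ) + 1 ≤ x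
    · have hx : x = (m : ℤ) + 1 := by push_cast at h2; omega
      rw [if_pos hc]
      have : (∑ j ∈ Finset.range m, if (j : ℤ) + 1 ≤ x then (1:ℤ) else 0)
          = ∑ j ∈ Finset.range m, 1 := by
        apply Finset.sum_congr rfl
        intro j hj
        rw [if_pos]
        have := Finset.mem_range.mp hj
        omega
      rw [this]; simp [hx]
    · rw [if_neg hc, add_zero]
      exact ih (by push_cast at h2 hc ⊢; omega)

lemma transposeP_sum (a : List ℤ) (ha : IsPartitionList a) :
    (transposeP a).sum = a.sum := by
  rw [transposeP_eq, list_range_map_sum]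
  have hb : ∀ x ∈ a, x ≤ (a.headI.toNat : ℤ) := by
    intro x hx
    have := mem_le_headI a ha.1 x hx
    have h0 := headI_nonneg a ha
    omega
  have hp := ha.2
  generalize a.headI.toNat = h at hb
  clear ha
  induction a with
  | nil => simp
  | cons x t ih =>
    have key : ∀ j : ℕ, ((List.filter (fun y => decide ((j : ℤ) + 1 ≤ y)) (x :: t)).length : ℤ)
        = ((List.filter (fun y => decide ((j : ℤ) + 1 ≤ y)) t).length : ℤ)
          + (if (j : ℤ) + 1 ≤ x then 1 else 0) := by
      intro j
      rw [← List.countP_eq_length_filter, ← List.countP_eq_length_filter, List.countP_cons]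
      by_cases hc : (j : ℤ) + 1 ≤ x <;> simp [hc]
    simp only [key]
    rw [Finset.sum_add_distrib, ih (fun y hy => hp y (by simp [hy]))
      (fun y hy => hb y (by simp [hy])), sum_ite_range h x (hp x (by simp)) (hb x (by simp)),
      List.sum_cons, add_comm]

lemma transposeP_headI (a : List ℤ) (ha : IsPartitionList a) :
    (transposeP a).headI = (a.length : ℤ) := by
  rcases eq_or_ne a [] with rfl | hne
  · simp [transposeP_eq]
  · have hpos : 0 < a.headI := headI_pos a ha hne
    have h0 : 0 < (transposeP a).length := by rw [transposeP_length]; omega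
    rw [headI_eq_get _ h0, transposeP_get]
    have hf : a.filter (fun x : ℤ => decide (((0:ℕ) : ℤ) + 1 ≤ x)) = a := by
      apply List.filter_eq_self.mpr
      intro y hy
      have := ha.2 y hy
      simp only [decide_eq_true_eq]
      push_cast
      omega
    rw [hf]

lemma sorted_count_iff (a : List ℤ) (h : a.Pairwise (· ≥ ·)) (c : ℤ) :
    ∀ (i : ℕ) (hi : i < a.length),
      (c ≤ a.get ⟨i, hi⟩ ↔ i < a.countP (fun x => decide (c ≤ x))) := by
  induction a with
  | nil => intro i hi; simp at hi
  | cons x t ih =>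
    rw [List.pairwise_cons] at h
    intro i hi
    rw [List.countP_cons]
    match i with
    | 0 =>
      show c ≤ x ↔ _
      constructor
      · intro hcx
        rw [if_pos (by simpa using hcx)]
        omega
      · intro hlt
        by_contra hcx
        rw [if_neg (by simpa using hcx), add_zero] at hlt
        obtain ⟨y, hy, hcy⟩ := List.countP_pos_iff.mp hlt
        have := h.1 y hy
        simp only [decide_eq_true_eq] at hcy
        exact hcx (le_trans hcy this)
    | Nat.succ i =>
      have hi' : i < t.length := by simpa using hi
      show c ≤ t.get ⟨i, hi'⟩ ↔ _
      have hiff := ih h.2 i hi'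
      constructor
      · intro hc
        have hmem : t.get ⟨i, hi'⟩ ∈ t := List.get_mem t ⟨i, hi'⟩
        have hcx : c ≤ x := le_trans hc (h.1 _ hmem)
        rw [if_pos (by simpa using hcx)]
        have := hiff.mp hc
        omega
      · intro hc
        apply hiff.mpr
        rcases le_or_gt c x with hcx | hcx
        · rw [if_pos (by simpa using hcx)] at hc; omega
        · rw [if_neg (by simp only [decide_eq_true_eq]; omega), add_zero] at hc; omega

lemma countP_range_lt (m h : ℕ) :
    (List.range h).countP (fun j => decide (j < m)) = min m h := by
  induction h with
  | zero => simp
  | succ h ih =>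
    rw [List.range_succ, List.countP_append, ih]
    by_cases hm : h < m <;> simp [hm] <;> omega

lemma transposeP_involution (a : List ℤ) (ha : IsPartitionList a) :
    transposeP (transposeP a) = a := by
  have ht := transposeP_partition a ha
  apply List.ext_get
  · rw [transposeP_length, transposeP_headI a ha]
    simp
  · intro i h1 h2
    rw [transposeP_get]
    have hia : i < a.length := h2
    rw [← List.countP_eq_length_filter]
    rw [transposeP_eq a, List.countP_map]
    have hcongr : ∀ j ∈ List.range a.headI.toNat,
        (((fun x : ℤ => decide ((i : ℤ) + 1 ≤ x)) ∘
          (fun j : ℕ => ((a.filter (fun x : ℤ => decide ((j : ℤ) + 1 ≤ x))).length : ℤ))) j = true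
        ↔ decide (j < (a.get ⟨i, hia⟩).toNat) = true) := by
      intro j hj
      simp only [Function.comp_apply, decide_eq_true_eq]
      rw [← List.countP_eq_length_filter]
      have hs := sorted_count_iff a ha.1 ((j : ℤ) + 1) i hia
      have hpos := ha.2 _ (List.get_mem a ⟨i, hia⟩)
      constructor
      · intro hcount
        have hle : ((j:ℤ)+1) ≤ a.get ⟨i, hia⟩ := hs.mpr (by push_cast at hcount ⊢; omega)
        omega
      · intro hj2
        have hle : ((j:ℤ)+1) ≤ a.get ⟨i, hia⟩ := by omega
        have := hs.mp hle
        push_cast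
        omega
    rw [List.countP_congr hcongr]
    have hrange : (List.range a.headI.toNat).countP (fun j => decide (j < (a.get ⟨i, hia⟩).toNat))
        = min (a.get ⟨i, hia⟩).toNat a.headI.toNat := countP_range_lt _ _
    rw [hrange]
    have hle : a.get ⟨i, hia⟩ ≤ a.headI := get_le_headI a ha.1 _
    have hpos := ha.2 _ (List.get_mem a ⟨i, hia⟩)
    have hmin : min (a.get ⟨i, hia⟩).toNat a.headI.toNat = (a.get ⟨i, hia⟩).toNat := by omega
    rw [hmin]
    have : ((a.get ⟨i, hia⟩).toNat : ℤ) = a.get ⟨i, hia⟩ := by omega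
    rw [this]

/-- splits -/
lemma sum_filter_split (l : List ℤ) :
    l.sum = (l.filter (fun x => decide (0 < x))).sum + (l.filter (fun x => decide (x < 0))).sum := by
  induction l with
  | nil => simp
  | cons x t ih =>
    rcases lt_trichotomy x 0 with h | h | h
    · simp [List.filter_cons, h, not_lt.mpr h.le, ih]; ring
    · simp [List.filter_cons, h, ih]
    · simp [List.filter_cons, h, not_lt.mpr h.le, ih]; ring

lemma length_filter_split (l : List ℤ) :
    l.length = (l.filter (fun x => decide (0 < x))).length
      + (l.filter (fun x => decide (x = 0))).length
      + (l.filter (fun x => decide (x < 0))).length := by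
  induction l with
  | nil => simp
  | cons x t ih =>
    rcases lt_trichotomy x 0 with h | h | h
    · simp [List.filter_cons, h, not_lt.mpr h.le, h.ne, ih]; omega
    · simp [List.filter_cons, h, ih]; omega
    · simp [List.filter_cons, h, not_lt.mpr h.le, h.ne', ih]; omega

lemma sorted_decomp (l : List ℤ) (h : l.Pairwise (· ≥ ·)) :
    l = l.filter (fun x => decide (0 < x)) ++ l.filter (fun x => decide (x = 0))
      ++ l.filter (fun x => decide (x < 0)) := by
  induction l with
  | nil => simp
  | cons x t ih =>
    rw [List.pairwise_cons] at h
    obtain ⟨hx, ht⟩ := h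
    rcases lt_trichotomy x 0 with h | h | h
    · have h1 : t.filter (fun x => decide (0 < x)) = [] :=
        List.filter_eq_nil_iff.mpr (fun y hy => by
          have := hx y hy; simp; omega)
      have h2 : t.filter (fun x => decide (x = 0)) = [] :=
        List.filter_eq_nil_iff.mpr (fun y hy => by
          have := hx y hy; simp; omega)
      simp only [List.filter_cons, decide_eq_true_eq]
      rw [if_neg (not_lt.mpr h.le), if_neg h.ne, if_pos h]
      simp only [h1, h2] at ih ⊢
      simpa using congrArg (x :: ·) (ih ht)
    · have h1 : t.filter (fun x => decide (0 < x)) = [] :=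
        List.filter_eq_nil_iff.mpr (fun y hy => by
          have := hx y hy; simp; omega)
      simp only [List.filter_cons, h]
      simp only [h1] at ih ⊢
      simpa [h] using congrArg (x :: ·) (ih ht)
    · simp only [List.filter_cons, h]
      simp only [decide_eq_true_eq]
      rw [if_pos trivial, if_neg h.ne', if_neg (not_lt.mpr h.le)]
      simpa using congrArg (x :: ·) (ih ht)

lemma filter_zero_replicate (l : List ℤ) :
    l.filter (fun x => decide (x = 0))
      = List.replicate (l.filter (fun x => decide (x = 0))).length 0 :=
  List.eq_replicate_iff.mpr ⟨rfl, fun b hb => by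
    have := List.of_mem_filter hb; simpa using this⟩





/-- valid pairs of partitions -/
def Pset (p k : ℕ) : Set (List ℤ × List ℤ) :=
  {ab | IsPartitionList ab.1 ∧ IsPartitionList ab.2 ∧ ab.1.length + ab.2.length ≤ k ∧
    ab.1.sum = ab.2.sum ∧ ab.1.headI + ab.2.headI ≤ (p : ℤ) - k}

lemma ofFn_weightOfPair (k : ℕ) (a b : List ℤ) (h : a.length + b.length ≤ k) :
    List.ofFn (weightOfPair k (a, b)) =
      a ++ List.replicate (k - a.length - b.length) 0 ++ (b.reverse.map (fun x => -x)) := by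
  apply List.ext_get
  · simp; omega
  · intro i h1 h2
    have hik : i < k := by simpa using h1
    rw [List.get_ofFn]
    show weightOfPair k (a, b) _ = _
    rw [weightOfPair]
    simp only [List.get_eq_getElem, Fin.coe_cast]
    by_cases hc1 : i < a.length
    · rw [dif_pos hc1]
      have hl : i < (a ++ List.replicate (k - a.length - b.length) 0).length := by
        simp only [List.length_append, List.length_replicate]; omega
      rw [List.getElem_append_left hl, List.getElem_append_left hc1]
    · rw [dif_neg hc1]
      by_cases hc2 : i < k - b.length
      · have hnc : ¬ (k - 1 - i < b.length) := by omega
        rw [dif_neg hnc]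
        rw [List.getElem_append_left (by simp; omega),
          List.getElem_append_right (le_of_not_gt (by simpa using hc1))]
        simp
      · have hc : k - 1 - i < b.length := by omega
        rw [dif_pos hc]
        rw [List.getElem_append_right (by simp; omega)]
        rw [List.getElem_map, List.getElem_reverse]
        have hidx : b.length - 1 - (i - (a ++ List.replicate (k - a.length - b.length) 0).length)
            = k - 1 - i := by simp; omega
        congr 1
        congr 1
        simp only [List.length_append, List.length_replicate]
        omega


lemma sorted_ofFn_iff {k : ℕ} {f : Fin k → ℤ} :
    (List.ofFn f).Pairwise (· ≥ ·) ↔ ∀ i j : Fin k, i ≤ j → f j ≤ f i := by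
  rw [List.pairwise_iff_get]
  constructor
  · intro h i j hij
    rcases eq_or_lt_of_le hij with rfl | hlt
    · exact le_refl _
    · have hi : (i : ℕ) < (List.ofFn f).length := by simp [i.2]
      have hj : (j : ℕ) < (List.ofFn f).length := by simp [j.2]
      have := h ⟨i, hi⟩ ⟨j, hj⟩ (by simpa using hlt)
      rw [List.get_ofFn, List.get_ofFn] at this
      simpa using this
  · intro h i j hij
    rw [List.get_ofFn, List.get_ofFn]
    exact h _ _ (by simpa using le_of_lt hij)

lemma pos_sum_nonneg (l : List ℤ) (h : ∀ x ∈ l, 0 < x) : 0 ≤ l.sum := by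
  induction l with
  | nil => simp
  | cons x t ih =>
    have := h x (by simp)
    have := ih (fun y hy => h y (by simp [hy]))
    simp only [List.sum_cons]; omega

lemma pos_sum_pos (l : List ℤ) (h : ∀ x ∈ l, 0 < x) (hne : l ≠ []) : 0 < l.sum := by
  cases l with
  | nil => simp at hne
  | cons x t =>
    have := h x (by simp)
    have := pos_sum_nonneg t (fun y hy => h y (by simp [hy]))
    simp only [List.sum_cons]; omega

lemma filter_headI (M : List ℤ) (p : ℤ → Bool) (hne : M ≠ []) (hp : p M.headI = true) :
    (M.filter p).headI = M.headI := by
  cases M with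
  | nil => simp at hne
  | cons x t => simp only [List.headI] at hp ⊢; rw [List.filter_cons, if_pos hp]

lemma headI_map_neg (l : List ℤ) (hne : l ≠ []) :
    (l.map (fun x => -x)).headI = -l.headI := by
  cases l with
  | nil => simp at hne
  | cons x t => rfl

lemma mem_headI_le (a : List ℤ) (ha : a.Pairwise (· ≤ ·)) (x : ℤ) (hx : x ∈ a) : a.headI ≤ x := by
  cases a with
  | nil => simp at hx
  | cons y t =>
    rcases List.mem_cons.mp hx with h | h
    · simp [h]
    · exact (List.pairwise_cons.mp ha).1 x h

lemma sum_map_neg (l : List ℤ) : (l.map (fun x => -x)).sum = -l.sum := by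
  induction l with
  | nil => simp
  | cons x t ih => simp only [List.map_cons, List.sum_cons, ih]; ring

lemma weightOfPair_mem (p k : ℕ) (ab : List ℤ × List ℤ) (hab : ab ∈ Pset p k) :
    weightOfPair k ab ∈ DZAdm p k := by
  obtain ⟨ha, hb, hlen, hsum, hhead⟩ := hab
  obtain ⟨a, b⟩ := ab
  simp only at ha hb hlen hsum hhead
  have hW := ofFn_weightOfPair k a b hlen
  have hsorted : (List.ofFn (weightOfPair k (a, b))).Pairwise (· ≥ ·) := by
    rw [hW, List.pairwise_append, List.pairwise_append]
    refine ⟨⟨ha.1, ?_, ?_⟩, ?_, ?_⟩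
    · exact List.pairwise_replicate.mpr (Or.inr le_rfl)
    · intro x hx y hy
      have hx0 := ha.2 x hx
      have hy0 : y = 0 := List.eq_of_mem_replicate hy
      omega
    · rw [List.pairwise_map, List.pairwise_reverse]
      exact List.Pairwise.imp (fun hxy => by simp only [ge_iff_le, neg_le_neg_iff]; exact hxy) hb.1
    · intro x hx y hy
      simp only [List.mem_map, List.mem_reverse] at hy
      obtain ⟨z, hz, rfl⟩ := hy
      have hz0 := hb.2 z hz
      rcases List.mem_append.mp hx with hx | hx
      · have := ha.2 x hx; omega
      · have : x = 0 := List.eq_of_mem_replicate hx; omega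
  refine ⟨sorted_ofFn_iff.mp hsorted, ?_, ?_⟩
  · rw [← List.sum_ofFn, hW]
    simp only [List.sum_append, List.sum_replicate]
    have h1 : (List.map (fun x => -x) b.reverse).sum = -b.sum := by
      rw [sum_map_neg, List.sum_reverse]
    rw [h1]
    simp [hsum]
  · have hub : ∀ i : Fin k, weightOfPair k (a, b) i ≤ a.headI := by
      intro i
      rw [weightOfPair]
      dsimp only
      split_ifs with h1 h2
      · exact get_le_headI a ha.1 _
      · have := hb.2 _ (List.get_mem b ⟨_, h2⟩)
        have := headI_nonneg a ha
        omega
      · exact headI_nonneg a ha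
    have hlb : ∀ i : Fin k, -b.headI ≤ weightOfPair k (a, b) i := by
      intro i
      rw [weightOfPair]
      dsimp only
      split_ifs with h1 h2
      · have := ha.2 _ (List.get_mem a ⟨_, h1⟩)
        have := headI_nonneg b hb
        omega
      · have := get_le_headI b hb.1 ⟨k - 1 - (i : ℕ), h2⟩
        omega
      · have := headI_nonneg b hb
        omega
    intro i j
    have := hub i
    have := hlb j
    omega

lemma toPair_mem (p k : ℕ) (hkp : k ≤ p) (l : Fin k → ℤ) (hl : l ∈ DZAdm p k) :
    toPair k l ∈ Pset p k := by
  obtain ⟨hmono, hsum, hadm⟩ := hl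
  set L := List.ofFn l with hL
  have hLs : L.Pairwise (· ≥ ·) := sorted_ofFn_iff.mpr hmono
  have hLsum : L.sum = 0 := by rw [hL, List.sum_ofFn]; exact hsum
  set A := L.filter (fun x => decide (0 < x)) with hA
  set N := L.filter (fun x => decide (x < 0)) with hN
  set B := (N.reverse).map (fun x => -x) with hB
  have hApart : IsPartitionList A := by
    constructor
    · exact List.Pairwise.sublist (List.filter_sublist (l := L)) hLs
    · intro x hx
      have := List.of_mem_filter hx
      simpa using this
  have hNsorted : N.Pairwise (· ≥ ·) := List.Pairwise.sublist (List.filter_sublist (l := L)) hLs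
  have hBpart : IsPartitionList B := by
    constructor
    · rw [hB, List.pairwise_map, List.pairwise_reverse]
      exact List.Pairwise.imp (fun hxy => by simp only [ge_iff_le, neg_le_neg_iff]; exact hxy)
        hNsorted
    · intro x hx
      rw [hB] at hx
      simp only [List.mem_map, List.mem_reverse] at hx
      obtain ⟨y, hy, rfl⟩ := hx
      have := List.of_mem_filter hy
      simp only [decide_eq_true_eq] at this
      omega
  have hBlen : B.length = N.length := by rw [hB]; simp
  have hlen : A.length + B.length ≤ k := by
    have hsplit := length_filter_split L
    rw [← hA, ← hN] at hsplit
    have hLlen : L.length = k := by rw [hL]; simp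
    omega
  have hsumAB : A.sum = B.sum := by
    have h1 := sum_filter_split L
    have h2 : B.sum = -N.sum := by rw [hB, sum_map_neg, List.sum_reverse]
    rw [← hA, ← hN] at h1
    omega
  refine ⟨hApart, hBpart, hlen, hsumAB, ?_⟩
  -- head bound
  by_cases hAe : A = []
  · have hBe : B = [] := by
      by_contra hBne
      have : 0 < B.sum := pos_sum_pos B hBpart.2 hBne
      rw [← hsumAB, hAe] at this
      simp at this
    show A.headI + B.headI ≤ (p : ℤ) - k
    rw [hAe, hBe]
    show (0:ℤ) + 0 ≤ (p:ℤ) - k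
    omega
  · have hBe : B ≠ [] := by
      intro hBe
      have : 0 < A.sum := pos_sum_pos A hApart.2 hAe
      rw [hsumAB, hBe] at this
      simp at this
    have hNe : N ≠ [] := by
      intro h; rw [hB, h] at hBe; simp at hBe
    have hLe : L ≠ [] := by
      intro h
      rw [h] at hA
      simp only [List.filter_nil] at hA
      exact hAe hA
    -- A.headI = L.headI
    have hLhead_pos : 0 < L.headI := by
      obtain ⟨x, hx⟩ := List.exists_mem_of_ne_nil A hAe
      have hxL := List.mem_of_mem_filter (hA ▸ hx)
      have hxpos := hApart.2 x hx
      have := mem_le_headI L hLs x hxL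
      omega
    have hAhead : A.headI = L.headI := by
      rw [hA]
      exact filter_headI L _ hLe (by simpa using hLhead_pos)
    -- B.headI = -(L.reverse.headI)
    set M := L.reverse with hM
    have hMs : M.Pairwise (· ≤ ·) := by
      rw [hM, List.pairwise_reverse]
      exact hLs
    have hMe : M ≠ [] := by
      simpa [hM] using hLe
    have hMhead_neg : M.headI < 0 := by
      obtain ⟨y, hy⟩ := List.exists_mem_of_ne_nil N hNe
      have hyL : y ∈ M := by
        rw [hM, List.mem_reverse]
        exact List.mem_of_mem_filter (hN ▸ hy)
      have hyneg : y < 0 := by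
        have := List.of_mem_filter (hN ▸ hy); simpa using this
      have := mem_headI_le M hMs y hyL
      omega
    have hNrev : N.reverse = M.filter (fun x => decide (x < 0)) := by
      rw [hN, hM, List.filter_reverse]
    have hNne' : N.reverse ≠ [] := by simpa using hNe
    have hBhead : B.headI = -M.headI := by
      rw [hB, headI_map_neg _ hNne', hNrev, filter_headI M _ hMe (by simpa using hMhead_neg)]
    -- now express L.headI and M.headI via l
    have hk0 : 0 < k := by
      by_contra hk
      have : k = 0 := by omega
      subst this
      rw [hL] at hLe
      simp at hLe
    have hLheadget : L.headI = l ⟨0, hk0⟩ := by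
      have h0 : 0 < (List.ofFn l).length := by simpa using hk0
      show (List.ofFn l).headI = _
      rw [headI_eq_get _ h0, List.get_ofFn]
      congr 1
    have hMheadget : M.headI = l ⟨k - 1, by omega⟩ := by
      have h0 : 0 < ((List.ofFn l).reverse).length := by simpa using hk0
      show ((List.ofFn l).reverse).headI = _
      rw [headI_eq_get _ h0]
      simp only [List.get_eq_getElem, List.getElem_reverse, List.getElem_ofFn]
      apply congrArg l
      apply Fin.ext
      simp only [List.length_ofFn, List.length_reverse]
      omega
    show A.headI + B.headI ≤ (p : ℤ) - k
    rw [hAhead, hBhead, hLheadget, hMheadget]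
    have hh := hadm ⟨0, hk0⟩ ⟨k - 1, by omega⟩
    linarith [hh]

lemma weightOfPair_toPair (p k : ℕ) (l : Fin k → ℤ) (hl : l ∈ DZAdm p k) :
    weightOfPair k (toPair k l) = l := by
  apply List.ofFn_injective
  obtain ⟨hmono, hsum, hadm⟩ := hl
  have hLs : (List.ofFn l).Pairwise (· ≥ ·) := sorted_ofFn_iff.mpr hmono
  set L := List.ofFn l with hL
  set A := L.filter (fun x => decide (0 < x)) with hA
  set N := L.filter (fun x => decide (x < 0)) with hN
  set Z := L.filter (fun x => decide (x = 0)) with hZ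
  set B := (N.reverse).map (fun x => -x) with hB
  have htp : toPair k l = (A, B) := rfl
  have hBlen : B.length = N.length := by rw [hB]; simp
  have hsplit := length_filter_split L
  rw [← hA, ← hN, ← hZ] at hsplit
  have hLlen : L.length = k := by rw [hL]; simp
  have hlen : A.length + B.length ≤ k := by omega
  rw [htp, ofFn_weightOfPair k A B hlen]
  have hrep : List.replicate (k - A.length - B.length) 0 = Z := by
    have : Z = List.replicate Z.length 0 := by rw [hZ]; exact filter_zero_replicate L
    rw [this]
    congr 1
    omega
  have hBrev : B.reverse.map (fun x => -x) = N := by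
    rw [hB, ← List.map_reverse, List.reverse_reverse, List.map_map]
    simp
  rw [hrep, hBrev]
  exact (sorted_decomp L hLs).symm

lemma toPair_weightOfPair (k : ℕ) (a b : List ℤ)
    (ha : IsPartitionList a) (hb : IsPartitionList b) (hlen : a.length + b.length ≤ k) :
    toPair k (weightOfPair k (a, b)) = (a, b) := by
  rw [toPair, ofFn_weightOfPair k a b hlen]
  set R := List.replicate (k - a.length - b.length) (0 : ℤ) with hR
  set Nb := b.reverse.map (fun x => -x) with hNb
  have hfa : (a ++ R ++ Nb).filter (fun x => decide (0 < x)) = a := by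
    rw [List.filter_append, List.filter_append]
    have h1 : a.filter (fun x => decide (0 < x)) = a :=
      List.filter_eq_self.mpr (fun x hx => by simpa using ha.2 x hx)
    have h2 : R.filter (fun x => decide (0 < x)) = [] :=
      List.filter_eq_nil_iff.mpr (fun x hx => by
        have := List.eq_of_mem_replicate hx; simp [this])
    have h3 : Nb.filter (fun x => decide (0 < x)) = [] :=
      List.filter_eq_nil_iff.mpr (fun x hx => by
        rw [hNb] at hx
        simp only [List.mem_map, List.mem_reverse] at hx
        obtain ⟨y, hy, rfl⟩ := hx
        have := hb.2 y hy
        simp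
        omega)
    rw [h1, h2, h3]
    simp
  have hfn : (a ++ R ++ Nb).filter (fun x => decide (x < 0)) = Nb := by
    rw [List.filter_append, List.filter_append]
    have h1 : a.filter (fun x => decide (x < 0)) = [] :=
      List.filter_eq_nil_iff.mpr (fun x hx => by
        have := ha.2 x hx; simp; omega)
    have h2 : R.filter (fun x => decide (x < 0)) = [] :=
      List.filter_eq_nil_iff.mpr (fun x hx => by
        have := List.eq_of_mem_replicate hx; simp [this])
    have h3 : Nb.filter (fun x => decide (x < 0)) = Nb :=
      List.filter_eq_self.mpr (fun x hx => by
        rw [hNb] at hx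
        simp only [List.mem_map, List.mem_reverse] at hx
        obtain ⟨y, hy, rfl⟩ := hx
        have := hb.2 y hy
        simp
        omega)
    rw [h1, h2, h3]
    simp
  rw [hfa, hfn]
  have : Nb.reverse.map (fun x => -x) = b := by
    rw [hNb, ← List.map_reverse, List.reverse_reverse, List.map_map]
    simp
  rw [this]

lemma transpose_pair_mem (p k : ℕ) (hkp : k ≤ p) (ab : List ℤ × List ℤ) (hab : ab ∈ Pset p k) :
    (transposeP ab.1, transposeP ab.2) ∈ Pset p (p - k) := by
  obtain ⟨ha, hb, hlen, hsum, hhead⟩ := hab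
  obtain ⟨a, b⟩ := ab
  simp only at ha hb hlen hsum hhead ⊢
  have ha0 := headI_nonneg a ha
  have hb0 := headI_nonneg b hb
  refine ⟨transposeP_partition a ha, transposeP_partition b hb, ?_, ?_, ?_⟩
  · rw [transposeP_length, transposeP_length]
    omega
  · rw [transposeP_sum a ha, transposeP_sum b hb]
    exact hsum
  · rw [transposeP_headI a ha, transposeP_headI b hb]
    have : ((p - k : ℕ) : ℤ) = (p : ℤ) - k := by omega
    rw [this]
    push_cast
    omega

lemma weightOfPair_cast (k k' : ℕ) (h : k = k') (ab : List ℤ × List ℤ) (i : Fin k') :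
    weightOfPair k ab (Fin.cast h.symm i) = weightOfPair k' ab i := by
  subst h; rfl

lemma dzadm_cast (p k k' : ℕ) (h : k = k') (l : Fin k' → ℤ) (hl : l ∈ DZAdm p k') :
    (fun i : Fin k => l (Fin.cast h i)) ∈ DZAdm p k := by
  subst h; exact hl


/-- Level-rank duality on simple objects: `D` is well defined — for
degree-zero admissible `λ ∈ ℤ^n` with pair `(α, β)` one has
`ℓ(α^t) + ℓ(β^t) ≤ p - n`, `|α^t| = |β^t|` and `(α^t)_1 + (β^t)_1 ≤ n` —
and `D` is a bijection from the degree-zero admissible weights in `ℤ^n`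
onto the degree-zero admissible weights in `ℤ^{p-n}`. -/
theorem level_rank_duality_bijection
    (p n : ℕ) (hp : p.Prime) (hn : 1 ≤ n) (hnp : n ≤ p - 1) :
    (∀ l ∈ DZAdm p n,
      (transposeP (toPair n l).1).length + (transposeP (toPair n l).2).length
        ≤ p - n ∧
      (transposeP (toPair n l).1).sum = (transposeP (toPair n l).2).sum ∧
      (transposeP (toPair n l).1).headI + (transposeP (toPair n l).2).headI
        ≤ (n : ℤ))
    ∧ Set.BijOn (levelRankD p n) (DZAdm p n) (DZAdm p (p - n)) := by
  have hp2 := hp.two_le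
  have hkp : n ≤ p := by omega
  have hpn : p - n ≤ p := by omega
  have hnn : n = p - (p - n) := by omega
  constructor
  · intro l hl
    have hab := toPair_mem p n hkp l hl
    obtain ⟨ha, hb, hlen, hsum, hhead⟩ := hab
    have ha0 := headI_nonneg _ ha
    have hb0 := headI_nonneg _ hb
    refine ⟨?_, ?_, ?_⟩
    · rw [transposeP_length, transposeP_length]
      omega
    · rw [transposeP_sum _ ha, transposeP_sum _ hb]
      exact hsum
    · rw [transposeP_headI _ ha, transposeP_headI _ hb]
      exact_mod_cast hlen
  · have hf : Set.MapsTo (levelRankD p n) (DZAdm p n) (DZAdm p (p - n)) := by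
      intro l hl
      exact weightOfPair_mem p (p - n) _
        (transpose_pair_mem p n hkp _ (toPair_mem p n hkp l hl))
    set g : (Fin (p - n) → ℤ) → (Fin n → ℤ) :=
      fun m i => levelRankD p (p - n) m (Fin.cast hnn i) with hg
    have hgm_eq : ∀ m : Fin (p - n) → ℤ, g m
        = weightOfPair n (transposeP (toPair (p - n) m).1, transposeP (toPair (p - n) m).2) := by
      intro m
      funext i
      exact weightOfPair_cast (p - (p - n)) n hnn.symm _ i
    have hgmaps : Set.MapsTo g (DZAdm p (p - n)) (DZAdm p n) := by
      intro m hm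
      have h1 : levelRankD p (p - n) m ∈ DZAdm p (p - (p - n)) :=
        weightOfPair_mem p (p - (p - n)) _
          (transpose_pair_mem p (p - n) hpn _ (toPair_mem p (p - n) hpn m hm))
      exact dzadm_cast p n (p - (p - n)) hnn _ h1
    have hleft : ∀ l ∈ DZAdm p n, g (levelRankD p n l) = l := by
      intro l hl
      have hab := toPair_mem p n hkp l hl
      have hT := transpose_pair_mem p n hkp _ hab
      rw [hgm_eq]
      have e1 : toPair (p - n) (levelRankD p n l)
          = (transposeP (toPair n l).1, transposeP (toPair n l).2) := by
        rw [levelRankD]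
        exact toPair_weightOfPair (p - n) _ _ hT.1 hT.2.1 hT.2.2.1
      rw [e1]
      simp only [transposeP_involution _ hab.1, transposeP_involution _ hab.2.1]
      rw [show ((toPair n l).1, (toPair n l).2) = toPair n l from rfl]
      exact weightOfPair_toPair p n l hl
    have hright : ∀ m ∈ DZAdm p (p - n), levelRankD p n (g m) = m := by
      intro m hm
      have hcd := toPair_mem p (p - n) hpn m hm
      have hT := transpose_pair_mem p (p - n) hpn _ hcd
      rw [show p - (p - n) = n from hnn.symm] at hT
      have e1 : toPair n (g m)
          = (transposeP (toPair (p - n) m).1, transposeP (toPair (p - n) m).2) := by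
        rw [hgm_eq]
        exact toPair_weightOfPair n _ _ hT.1 hT.2.1 hT.2.2.1
      rw [levelRankD, e1]
      simp only [transposeP_involution _ hcd.1, transposeP_involution _ hcd.2.1]
      rw [show ((toPair (p - n) m).1, (toPair (p - n) m).2) = toPair (p - n) m from rfl]
      exact weightOfPair_toPair p (p - n) m hm
    exact Set.InvOn.bijOn ⟨hleft, hright⟩ hf hgmaps
end
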